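/- arXiv:2204.08423 — 6 statements merged into one kernel-verified Lean document; each statement's English description precedes it below -/
import Mathlib

section
/- Let P be a polynomial with integer coefficients of degree r ≥ 2 whose coefficient of x^(r−1) is equal to zero, and let s be a nonzero integer. For every ε > 0 there exists N_0 = N_0(P, s, ε) such that the following holds for all integers N ≥ N_0. Let θ be a real number with 1/1000 ≤ θ ≤ 1/20 and set M = ⌊N^θ⌋. Let β_1, β_2 be positive integer multiples of r with r ≤ β_1 < β_2 ≤ M. Suppose n is an integer with N ≤ n < 2N and x, x_1, x_2 are positive integers satisfying s·n! = P(x), s·(n−β_1)! = P(x_1) and s·(n−β_2)! = P(x_2). Then for each i ∈ {1, 2} there exists an integer p_i such that |∏_{j=1}^{β_i−1} (1 − j/n)^(−1/r) − p_i/x| ≤ x^(ε−2). -/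
/-!
Let `a` be the leading coefficient of `P`. Since `P` has no `x^(r-1)` term,
`P(x) = a x^r (1 + O(x⁻²))`, so dividing `s·n! = P(x)` by `s·(n-β)! = P(y)` gives
`n!/(n-β)! = (x/y)^r (1 + O(x⁻² + y⁻²))`. As `∏_{j<β} (1 - j/n) = n!/((n-β)! n^β)`, its
`(-1/r)`-th power is `n^(β/r) y/x · (1 + O(y⁻²))`, and `p = n^(β/r) y` is an integer because
`r ∣ β`. Finally `y⁻² ≤ x^(ε-2)`: the ratio `(x/y)^r ≈ n!/(n-β)! ≤ (2N)^(N^(1/20))` is negligible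
against `x^(rε) ≈ (n!)^ε`.
-/

open scoped Nat Classical
open Filter Real Finset Asymptotics
open scoped Polynomial

lemma abs_div_sub_one_le {p q e₁ e₂ : ℝ} (hp : |p - 1| ≤ e₁) (he₁ : e₁ ≤ 1 / 2)
    (hq : |q - 1| ≤ e₂) : |q / p - 1| ≤ 2 * (e₁ + e₂) := by
  have hp2 : 1 / 2 ≤ p := by linarith [(abs_le.1 hp).1]
  rw [div_sub_one (by linarith), abs_div, abs_of_pos (show 0 < p by linarith),
    div_le_iff₀ (by linarith)]
  calc |q - p| = |(q - 1) - (p - 1)| := by ring_nf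
    _ ≤ |q - 1| + |p - 1| := abs_sub _ _
    _ ≤ 2 * (e₁ + e₂) * (1 / 2) := by linarith
    _ ≤ 2 * (e₁ + e₂) * p := by
        have : 0 ≤ e₁ + e₂ := by linarith [abs_nonneg (p - 1), abs_nonneg (q - 1)]
        gcongr

lemma abs_rpow_sub_one_le {t a : ℝ} (ht : 0 < t) (ha₀ : 0 ≤ a) (ha₁ : a ≤ 1) :
    |t ^ a - 1| ≤ |t - 1| := by
  rcases le_total 1 t with h | h
  · have : t ^ a ≤ t := by
      simpa using rpow_le_rpow_of_exponent_le h ha₁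
    rw [abs_of_nonneg (by linarith [one_le_rpow h ha₀]), abs_of_nonneg (by linarith)]
    linarith
  · have : t ≤ t ^ a := by
      simpa using rpow_le_rpow_of_exponent_ge ht h ha₁
    rw [abs_of_nonpos (by linarith [rpow_le_one ht.le h ha₀]), abs_of_nonpos (by linarith)]
    linarith

lemma abs_rpow_inv_sub_le {r : ℕ} (hr : r ≠ 0) {u w t : ℝ} (hw : 0 < w) (ht : 0 < t)
    (hu : u = w ^ r * t) : |u ^ (r⁻¹ : ℝ) - w| ≤ w * |t - 1| := by
  have hr₁ : (r⁻¹ : ℝ) ≤ 1 := inv_le_one_of_one_le₀ (by exact_mod_cast Nat.one_le_iff_ne_zero.2 hr)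
  rw [hu, mul_rpow (by positivity) ht.le, pow_rpow_inv_natCast hw.le hr, ← mul_sub_one,
    abs_mul, abs_of_pos hw]
  exact mul_le_mul_of_nonneg_left (abs_rpow_sub_one_le ht (by positivity) hr₁) hw.le

lemma isLittleO_rpow_mul_log_two_mul_atTop {γ : ℝ} (hγ : γ < 1) :
    (fun x : ℝ => x ^ γ * log (2 * x)) =o[atTop] id := by
  have hlog : (fun x : ℝ => log (2 * x)) =o[atTop] fun x => x ^ (1 - γ) := by
    have hconst : (fun _ : ℝ => log 2) =o[atTop] fun x => x ^ (1 - γ) :=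
      isLittleO_const_left.2 <| Or.inr <|
        tendsto_norm_atTop_atTop.comp (tendsto_rpow_atTop (sub_pos.2 hγ))
    refine (hconst.add (isLittleO_log_rpow_atTop (sub_pos.2 hγ))).congr' ?_ EventuallyEq.rfl
    filter_upwards [eventually_gt_atTop 0] with x hx
    rw [log_mul two_ne_zero hx.ne']
  refine ((isBigO_refl (fun x : ℝ => x ^ γ) atTop).mul_isLittleO hlog).congr' EventuallyEq.rfl ?_
  filter_upwards [eventually_gt_atTop 0] with x hx
  rw [← rpow_add hx, add_sub_cancel, rpow_one, id]

lemma eventually_mul_rpow_le_factorial_rpow {c γ ε : ℝ} (hc : 0 < c) (hγ : γ < 1) (hε : 0 < ε) :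
    ∀ᶠ N : ℕ in atTop, c * (2 * N : ℝ) ^ (2 * (N : ℝ) ^ γ) ≤ (N ! : ℝ) ^ ε := by
  have hlin : ∀ᶠ x : ℝ in atTop, log c + 2 * (x ^ γ * log (2 * x)) ≤ ε * log 2 * x := by
    have hlog2 : 0 < ε * log 2 := mul_pos hε (log_pos one_lt_two)
    filter_upwards [((isLittleO_const_id_atTop (log c)).add
      ((isLittleO_rpow_mul_log_two_mul_atTop hγ).const_mul_left 2)).bound hlog2,
      eventually_ge_atTop 0] with x hx hx0
    simpa [abs_of_nonneg hx0] using (le_abs_self _).trans hx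
  filter_upwards [tendsto_natCast_atTop_atTop.eventually hlin,
    FloorSemiring.eventually_mul_pow_lt_factorial_sub (1 : ℝ) 2 0, eventually_gt_atTop 0]
    with N hN hfact hN0
  have hN0' : (0 : ℝ) < N := by exact_mod_cast hN0
  have hlogfact : N * log 2 ≤ log (N ! : ℝ) := by
    rw [← log_pow]
    exact log_le_log (by positivity) (by simpa using hfact.le)
  rw [← log_le_log_iff (by positivity) (by positivity), log_mul hc.ne' (by positivity),
    log_rpow (by positivity), log_rpow (by positivity)]
  nlinarith

lemma eventually_two_mul_rpow_sq_le {γ : ℝ} (hγ : γ < 1 / 2) :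
    ∀ᶠ N : ℕ in atTop, 2 * ((N : ℝ) ^ γ) ^ 2 ≤ N := by
  have h := (tendsto_rpow_neg_atTop (by linarith : 0 < 1 - 2 * γ)).eventually
    (ge_mem_nhds (by norm_num : (0 : ℝ) < 1 / 2))
  filter_upwards [tendsto_natCast_atTop_atTop.eventually h, eventually_gt_atTop 0] with N hN hN0
  have hN0' : (0 : ℝ) < N := by exact_mod_cast hN0
  have hsplit : ((N : ℝ) ^ γ) ^ 2 = (N : ℝ) ^ (-(1 - 2 * γ)) * N := by
    rw [← rpow_natCast, ← rpow_mul hN0'.le, ← rpow_add_one hN0'.ne']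
    ring_nf
  rw [hsplit]
  nlinarith

lemma eventually_le_factorial_div_two (L : ℝ) : ∀ᶠ N : ℕ in atTop, L ≤ ((N / 2)! : ℝ) := by
  filter_upwards [eventually_ge_atTop (2 * ⌈L⌉₊)] with N hN
  calc L ≤ ⌈L⌉₊ := Nat.le_ceil L
    _ ≤ ((N / 2)! : ℝ) := by
      exact_mod_cast (show ⌈L⌉₊ ≤ N / 2 by omega).trans (Nat.self_le_factorial _)

lemma prod_Icc_one_sub_div_eq_descFactorial_div_pow {n β : ℕ} (hβn : β ≤ n) :
    ∏ j ∈ Icc 1 (β - 1), (1 - (j : ℝ) / n) = n.descFactorial β / (n : ℝ) ^ β := by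
  rcases β.eq_zero_or_pos with rfl | hβ
  · simp
  have hn : (n : ℝ) ≠ 0 := by exact_mod_cast (show n ≠ 0 by omega)
  obtain ⟨k, rfl⟩ : ∃ k, β = k + 1 := ⟨β - 1, by omega⟩
  rw [add_tsub_cancel_right]
  clear hβ
  induction k with
  | zero => simp [hn]
  | succ k ih =>
    rw [prod_Icc_succ_top (by omega), ih (by omega),
      Nat.descFactorial_succ n (k + 1), Nat.cast_mul, Nat.cast_sub (by omega)]
    field_simp
    push_cast
    ring

lemma one_sub_sq_div_le_descFactorial_div_pow {n β : ℕ} (hβn : β ≤ n) :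
    1 - (β : ℝ) ^ 2 / n ≤ n.descFactorial β / (n : ℝ) ^ β := by
  rcases n.eq_zero_or_pos with rfl | hn
  · obtain rfl : β = 0 := by omega
    simp
  have hn' : (0 : ℝ) < n := by exact_mod_cast hn
  have hβn' : (β : ℝ) ≤ n := by exact_mod_cast hβn
  have hdesc : ((n : ℝ) - β) ^ β ≤ n.descFactorial β := by
    calc ((n : ℝ) - β) ^ β ≤ ((n + 1 - β : ℕ) : ℝ) ^ β := by
          gcongr
          rw [Nat.cast_sub (by omega)]
          push_cast
          linarith
      _ ≤ n.descFactorial β := by exact_mod_cast Nat.pow_sub_le_descFactorial n β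
  calc 1 - (β : ℝ) ^ 2 / n = 1 + β * (-(β / n)) := by ring
    _ ≤ (1 + -(β / n : ℝ)) ^ β :=
        one_add_mul_le_pow (by linarith [div_le_one_of_le₀ hβn' hn'.le]) β
    _ = ((n : ℝ) - β) ^ β / (n : ℝ) ^ β := by rw [← div_pow]; field_simp; ring
    _ ≤ n.descFactorial β / (n : ℝ) ^ β := by gcongr

noncomputable def coeffNorm (Q : ℝ[X]) (r : ℕ) : ℝ := ∑ i ∈ range (r + 1), |Q.coeff i|

noncomputable def coeffRatio (Q : ℝ[X]) (r : ℕ) : ℝ := coeffNorm Q r / |Q.coeff r|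

section

variable {Q : ℝ[X]} {r : ℕ} {t : ℝ}

lemma coeffNorm_pos (ha : Q.coeff r ≠ 0) : 0 < coeffNorm Q r :=
  (abs_pos.2 ha).trans_le <| single_le_sum (f := fun i => |Q.coeff i|)
    (fun _ _ => abs_nonneg _) (self_mem_range_succ r)

lemma coeffRatio_pos (ha : Q.coeff r ≠ 0) : 0 < coeffRatio Q r :=
  div_pos (coeffNorm_pos ha) (abs_pos.2 ha)

lemma abs_eval_le_coeffNorm_mul_pow (hQ : Q.natDegree ≤ r) (ht : 1 ≤ t) :
    |Q.eval t| ≤ coeffNorm Q r * t ^ r := by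
  rw [Polynomial.eval_eq_sum_range' (Nat.lt_succ_of_le hQ), coeffNorm, sum_mul]
  refine (abs_sum_le_sum_abs _ _).trans (sum_le_sum fun i hi => ?_)
  rw [abs_mul, abs_pow, abs_of_nonneg (zero_le_one.trans ht)]
  exact mul_le_mul_of_nonneg_left (pow_le_pow_right₀ ht (Nat.lt_succ_iff.1 (mem_range.1 hi)))
    (abs_nonneg _)

lemma abs_eval_sub_coeff_mul_pow_le (hQ : Q.natDegree ≤ r) (hc : Q.coeff (r - 1) = 0)
    (ht : 1 ≤ t) : |Q.eval t - Q.coeff r * t ^ r| ≤ coeffNorm Q r * t ^ (r - 2) := by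
  rw [Polynomial.eval_eq_sum_range' (Nat.lt_succ_of_le hQ), sum_range_succ, add_sub_cancel_right]
  calc |∑ i ∈ range r, Q.coeff i * t ^ i|
      ≤ ∑ i ∈ range r, |Q.coeff i| * t ^ (r - 2) := by
        refine (abs_sum_le_sum_abs _ _).trans (sum_le_sum fun i hi => ?_)
        rw [abs_mul, abs_pow, abs_of_nonneg (zero_le_one.trans ht)]
        rcases eq_or_ne i (r - 1) with rfl | hi'
        · simp [hc]
        · have := mem_range.1 hi
          exact mul_le_mul_of_nonneg_left (pow_le_pow_right₀ ht (by omega)) (abs_nonneg _)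
    _ ≤ coeffNorm Q r * t ^ (r - 2) := by
        rw [← sum_mul]
        exact mul_le_mul_of_nonneg_right (sum_le_sum_of_subset_of_nonneg
          (range_subset_range.2 r.le_succ) fun _ _ _ => abs_nonneg _) (by positivity)

lemma abs_eval_div_sub_one_le (hr : 2 ≤ r) (hQ : Q.natDegree ≤ r) (hc : Q.coeff (r - 1) = 0)
    (ha : Q.coeff r ≠ 0) (ht : 1 ≤ t) :
    |Q.eval t / (Q.coeff r * t ^ r) - 1| ≤ coeffRatio Q r / t ^ 2 := by
  have ht0 : 0 < t := by linarith
  have hsplit : t ^ r = t ^ (r - 2) * t ^ 2 := by rw [← pow_add, Nat.sub_add_cancel hr]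
  rw [coeffRatio, div_sub_one (by positivity), abs_div, abs_mul, abs_pow, abs_of_pos ht0,
    div_div, div_le_div_iff₀ (by positivity) (by positivity)]
  calc |Q.eval t - Q.coeff r * t ^ r| * (|Q.coeff r| * t ^ 2)
      ≤ coeffNorm Q r * t ^ (r - 2) * (|Q.coeff r| * t ^ 2) := by
        gcongr; exact abs_eval_sub_coeff_mul_pow_le hQ hc ht
    _ = coeffNorm Q r * (|Q.coeff r| * t ^ r) := by rw [hsplit]; ring

lemma le_of_coeffNorm_mul_pow_le_abs_eval (hQ : Q.natDegree ≤ r) (ha : Q.coeff r ≠ 0)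
    (hr : r ≠ 0) (ht : 1 ≤ t) {L : ℝ} (hL : 0 ≤ L) (h : coeffNorm Q r * L ^ r ≤ |Q.eval t|) :
    L ≤ t := by
  refine (pow_le_pow_iff_left₀ hL (by linarith) hr).1 (le_of_mul_le_mul_left ?_ (coeffNorm_pos ha))
  exact h.trans (abs_eval_le_coeffNorm_mul_pow hQ ht)

/-- With `a = Q.coeff r`, `x ^ r / (D * y ^ r)` is the quotient of `Q(y) / (a y^r)` by
`Q(x) / (a x^r)`, two numbers close to `1`. -/
lemma abs_pow_div_mul_pow_sub_one_le (hr : 2 ≤ r) (hQ : Q.natDegree ≤ r)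
    (hc : Q.coeff (r - 1) = 0) (ha : Q.coeff r ≠ 0) {x y D : ℝ} (hx : 1 ≤ x) (hy : 1 ≤ y)
    (hQxy : Q.eval x = D * Q.eval y) (hxκ : 2 * coeffRatio Q r ≤ x ^ 2)
    (hyκ : coeffRatio Q r < y ^ 2) :
    |x ^ r / (D * y ^ r) - 1| ≤ 2 * (coeffRatio Q r / x ^ 2 + coeffRatio Q r / y ^ 2) := by
  have hp := abs_eval_div_sub_one_le hr hQ hc ha hx
  have hq := abs_eval_div_sub_one_le hr hQ hc ha hy
  have hQy : Q.eval y ≠ 0 := by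
    rintro h
    rw [h, zero_div, zero_sub, abs_neg, abs_one, le_div_iff₀ (by positivity)] at hq
    linarith
  convert abs_div_sub_one_le hp ?_ hq using 3
  · rw [hQxy]
    field_simp
  · rw [div_le_iff₀ (by positivity)]
    linarith

theorem abs_rpow_inv_sub_mul_div_le (hr : 2 ≤ r) (hQ : Q.natDegree ≤ r)
    (hc : Q.coeff (r - 1) = 0) (ha : Q.coeff r ≠ 0) {x y D m ε : ℝ} (hx : 1 ≤ x) (hy : 1 ≤ y)
    (hD : 1 ≤ D) (hm : 0 < m) (hQxy : Q.eval x = D * Q.eval y)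
    (hxκ : 8 * coeffRatio Q r ≤ x ^ 2) (hyκ : 8 * coeffRatio Q r ≤ y ^ 2) (hmD : m ^ r ≤ 2 * D)
    (hxε : 4 * (16 * coeffRatio Q r) ^ r * D ^ 2 ≤ (x ^ ε) ^ r) :
    |(m ^ r / D) ^ (r⁻¹ : ℝ) - m * y / x| ≤ x ^ (ε - 2) := by
  set κ := coeffRatio Q r
  have hκ : 0 < κ := coeffRatio_pos ha
  have hx0 : 0 < x := by linarith
  have hr0 : r ≠ 0 := by omega
  set t := x ^ r / (D * y ^ r) with ht
  have ht1 : |t - 1| ≤ 2 * (κ / x ^ 2 + κ / y ^ 2) :=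
    abs_pow_div_mul_pow_sub_one_le hr hQ hc ha hx hy hQxy (by linarith) (by linarith)
  have hκx : κ / x ^ 2 ≤ 1 / 8 := by rw [div_le_iff₀ (by positivity)]; linarith
  have hκy : κ / y ^ 2 ≤ 1 / 8 := by rw [div_le_iff₀ (by positivity)]; linarith
  have htlo : 1 / 2 ≤ t := by linarith [(abs_le.1 ht1).1]
  have hu : m ^ r / D = (m * y / x) ^ r * t := by rw [ht, div_pow, mul_pow]; field_simp
  have hw : m * y / x ≤ 4 := by
    refine (pow_le_pow_iff_left₀ (by positivity) (by norm_num) hr0).1 ?_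
    have h4 : (4 : ℝ) ≤ 4 ^ r := by
      simpa using pow_le_pow_right₀ (by norm_num : (1 : ℝ) ≤ 4) (Nat.one_le_iff_ne_zero.2 hr0)
    have : (m * y / x) ^ r * t ≤ 2 := by rw [← hu, div_le_iff₀ (by linarith)]; linarith
    nlinarith [pow_nonneg (by positivity : 0 ≤ m * y / x) r]
  have hratio : (x / y) ^ r ≤ 2 * D := by
    rw [div_pow, div_le_iff₀ (by positivity), show x ^ r = t * (D * y ^ r) by rw [ht]; field_simp]
    nlinarith [(abs_le.1 ht1).2, mul_pos (by linarith : 0 < D) (pow_pos (by linarith : 0 < y) r)]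
  have hκxy : 16 * κ * (x / y) ^ 2 ≤ x ^ ε := by
    refine (pow_le_pow_iff_left₀ (by positivity) (by positivity) hr0).1 (le_trans ?_ hxε)
    rw [mul_pow, ← pow_mul, mul_comm 2 r, pow_mul]
    nlinarith [pow_le_pow_left₀ (by positivity) hratio 2, pow_pos (by positivity : 0 < 16 * κ) r]
  have hκx' : 16 * κ ≤ x ^ ε := by
    refine (pow_le_pow_iff_left₀ (by positivity) (by positivity) hr0).1 (le_trans ?_ hxε)
    nlinarith [pow_pos (by positivity : 0 < 16 * κ) r, one_le_pow₀ hD (n := 2)]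
  calc |(m ^ r / D) ^ (r⁻¹ : ℝ) - m * y / x|
      ≤ m * y / x * |t - 1| := abs_rpow_inv_sub_le hr0 (by positivity) (by linarith) hu
    _ ≤ 4 * (2 * (κ / x ^ 2 + κ / y ^ 2)) := by gcongr
    _ = (8 * κ + 8 * κ * (x / y) ^ 2) / x ^ 2 := by field_simp; ring
    _ ≤ x ^ ε / x ^ 2 := by gcongr; linarith
    _ = x ^ (ε - 2) := by rw [rpow_sub hx0, rpow_two]

theorem exists_abs_prod_rpow_sub_le_of_eval_eq_descFactorial_mul (hr : 2 ≤ r)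
    (hQ : Q.natDegree ≤ r) (hc : Q.coeff (r - 1) = 0) (ha : Q.coeff r ≠ 0) {n β x y : ℕ}
    {ε : ℝ} (hn : 0 < n) (hrβ : r ∣ β) (hβn : 2 * β ^ 2 ≤ n) (hx : 0 < x) (hy : 0 < y)
    (hQxy : Q.eval (x : ℝ) = n.descFactorial β * Q.eval (y : ℝ))
    (hxκ : 8 * coeffRatio Q r ≤ (x : ℝ) ^ 2) (hyκ : 8 * coeffRatio Q r ≤ (y : ℝ) ^ 2)
    (hxε : 4 * (16 * coeffRatio Q r) ^ r * ((n : ℝ) ^ β) ^ 2 ≤ ((x : ℝ) ^ ε) ^ r) :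
    ∃ p : ℤ, |∏ j ∈ Icc 1 (β - 1), (1 - (j : ℝ) / n) ^ (-(1 : ℝ) / r) - p / x| ≤
      (x : ℝ) ^ (ε - 2) := by
  have hβ : β ≤ n := by nlinarith
  have hn' : (0 : ℝ) < n := by exact_mod_cast hn
  have hD : (1 : ℝ) ≤ n.descFactorial β := by
    exact_mod_cast Nat.one_le_iff_ne_zero.2 fun h => by
      rw [Nat.descFactorial_eq_zero_iff_lt] at h; omega
  have hm : ((n : ℝ) ^ (β / r)) ^ r = (n : ℝ) ^ β := by rw [← pow_mul, Nat.div_mul_cancel hrβ]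
  have hprod : ∏ j ∈ Icc 1 (β - 1), (1 - (j : ℝ) / n) ^ (-(1 : ℝ) / r) =
      (((n : ℝ) ^ (β / r)) ^ r / n.descFactorial β) ^ (r⁻¹ : ℝ) := by
    have hfac : ∀ j ∈ Icc 1 (β - 1), 0 ≤ 1 - (j : ℝ) / n := fun j hj => by
      have : (j : ℝ) ≤ n := by exact_mod_cast (mem_Icc.1 hj).2.trans (Nat.sub_le β 1) |>.trans hβ
      rw [sub_nonneg, div_le_one hn']
      exact this
    rw [finsetProd_rpow _ _ hfac, prod_Icc_one_sub_div_eq_descFactorial_div_pow hβ, hm, neg_div,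
      one_div, rpow_neg (by positivity), ← inv_rpow (by positivity), inv_div]
  have hmD : ((n : ℝ) ^ (β / r)) ^ r ≤ 2 * n.descFactorial β := by
    have h := one_sub_sq_div_le_descFactorial_div_pow hβ
    have : (β : ℝ) ^ 2 / n ≤ 1 / 2 := by
      rw [div_le_iff₀ hn']
      have : (2 * β ^ 2 : ℝ) ≤ n := by exact_mod_cast hβn
      linarith
    rw [le_div_iff₀ (by positivity)] at h
    rw [hm]
    nlinarith [pow_pos hn' β]
  have hκ := coeffRatio_pos ha
  have hDpow : (n.descFactorial β : ℝ) ≤ (n : ℝ) ^ β := by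
    exact_mod_cast Nat.descFactorial_le_pow n β
  refine ⟨(n ^ (β / r) * y : ℕ), ?_⟩
  rw [hprod, show (((n ^ (β / r) * y : ℕ) : ℤ) : ℝ) = (n : ℝ) ^ (β / r) * y by push_cast; ring]
  exact abs_rpow_inv_sub_mul_div_le hr hQ hc ha (by exact_mod_cast hx) (by exact_mod_cast hy) hD
    (by positivity) hQxy hxκ hyκ hmD (le_trans (by gcongr) hxε)

/-- For `β ≤ N^(1/20)` and `N ≤ n < 2N`, the three conditions give respectively `2β² ≤ n`,
`8 · coeffRatio Q r ≤ x, y` (via `(N/2)! ≤ (n-β)! ≤ |Q(y)|`), and `(n^β)² ≤ (2N)^(2N^(1/20))`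
negligible against `(n!)^ε ≤ (coeffNorm Q r · x^r)^ε`. -/
structure IsSufficientlyLarge (Q : ℝ[X]) (r : ℕ) (ε : ℝ) (N : ℕ) : Prop where
  two_mul_rpow_sq_le : 2 * ((N : ℝ) ^ (1 / 20 : ℝ)) ^ 2 ≤ N
  coeffNorm_mul_pow_le : coeffNorm Q r * (8 * coeffRatio Q r) ^ r ≤ ((N / 2)! : ℝ)
  mul_rpow_le_factorial_rpow : 4 * (16 * coeffRatio Q r) ^ r * coeffNorm Q r ^ ε *
    (2 * N : ℝ) ^ (2 * (N : ℝ) ^ (1 / 20 : ℝ)) ≤ (N ! : ℝ) ^ ε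

lemma eventually_isSufficientlyLarge (ha : Q.coeff r ≠ 0) {ε : ℝ} (hε : 0 < ε) :
    ∀ᶠ N in atTop, IsSufficientlyLarge Q r ε N := by
  have hD := coeffNorm_pos ha
  have hκ := coeffRatio_pos ha
  filter_upwards [eventually_two_mul_rpow_sq_le (γ := 1 / 20) (by norm_num),
    eventually_le_factorial_div_two (coeffNorm Q r * (8 * coeffRatio Q r) ^ r),
    eventually_mul_rpow_le_factorial_rpow (γ := 1 / 20)
      (c := 4 * (16 * coeffRatio Q r) ^ r * coeffNorm Q r ^ ε) (by positivity) (by norm_num) hε]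
    with N h₁ h₂ h₃
  exact ⟨h₁, h₂, h₃⟩

namespace IsSufficientlyLarge

variable {s ε : ℝ} {N n β x : ℕ} (hN : IsSufficientlyLarge Q r ε N)
include hN

lemma two_mul_sq_le (hβN : (β : ℝ) ≤ (N : ℝ) ^ (1 / 20 : ℝ)) (hNn : N ≤ n) : 2 * β ^ 2 ≤ n := by
  have hNn' : (N : ℝ) ≤ n := by exact_mod_cast hNn
  have : (2 * β ^ 2 : ℝ) ≤ n := by
    nlinarith [pow_le_pow_left₀ (Nat.cast_nonneg β) hβN 2, hN.two_mul_rpow_sq_le]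
  exact_mod_cast this

lemma le_sq (hQ : Q.natDegree ≤ r) (ha : Q.coeff r ≠ 0) (hr : r ≠ 0) (hs : 1 ≤ |s|) {k : ℕ}
    (hk : N / 2 ≤ k) (hx : 0 < x) (hQx : Q.eval (x : ℝ) = s * k !) :
    8 * coeffRatio Q r ≤ (x : ℝ) ^ 2 := by
  have hx1 : (1 : ℝ) ≤ x := by exact_mod_cast hx
  have hκ := coeffRatio_pos ha
  refine le_trans ?_ (le_self_pow₀ hx1 two_ne_zero)
  refine le_of_coeffNorm_mul_pow_le_abs_eval hQ ha hr hx1 (by positivity) ?_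
  calc coeffNorm Q r * (8 * coeffRatio Q r) ^ r ≤ ((N / 2)! : ℝ) := hN.coeffNorm_mul_pow_le
    _ ≤ k ! := by exact_mod_cast Nat.factorial_le hk
    _ ≤ |Q.eval (x : ℝ)| := by
      rw [hQx, abs_mul, Nat.abs_cast]
      exact le_mul_of_one_le_left (by positivity) hs

lemma pow_le_rpow_pow (hQ : Q.natDegree ≤ r) (ha : Q.coeff r ≠ 0) (hs : 1 ≤ |s|) (hε : 0 ≤ ε)
    (hβN : (β : ℝ) ≤ (N : ℝ) ^ (1 / 20 : ℝ)) (hNn : N ≤ n) (hn : n < 2 * N) (hx : 0 < x)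
    (hQx : Q.eval (x : ℝ) = s * n !) :
    4 * (16 * coeffRatio Q r) ^ r * ((n : ℝ) ^ β) ^ 2 ≤ ((x : ℝ) ^ ε) ^ r := by
  have hD := coeffNorm_pos ha
  have hκ := coeffRatio_pos ha
  have hN1 : (1 : ℝ) ≤ 2 * N := by norm_cast; omega
  have hnβ : ((n : ℝ) ^ β) ^ 2 ≤ (2 * N : ℝ) ^ (2 * (N : ℝ) ^ (1 / 20 : ℝ)) := by
    calc ((n : ℝ) ^ β) ^ 2 ≤ ((2 * N : ℝ) ^ β) ^ 2 := by gcongr; exact_mod_cast hn.le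
      _ = (2 * N : ℝ) ^ ((2 * β : ℕ) : ℝ) := by rw [rpow_natCast, ← pow_mul, mul_comm β 2]
      _ ≤ _ := rpow_le_rpow_of_exponent_le hN1 (by push_cast; linarith)
  have hxr : (N ! : ℝ) ≤ coeffNorm Q r * (x : ℝ) ^ r := by
    calc (N ! : ℝ) ≤ n ! := by exact_mod_cast Nat.factorial_le hNn
      _ ≤ |Q.eval (x : ℝ)| := by
        rw [hQx, abs_mul, Nat.abs_cast]
        exact le_mul_of_one_le_left (by positivity) hs
      _ ≤ coeffNorm Q r * (x : ℝ) ^ r := abs_eval_le_coeffNorm_mul_pow hQ (by exact_mod_cast hx)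
  refine le_of_mul_le_mul_left ?_ (rpow_pos_of_pos hD ε)
  calc coeffNorm Q r ^ ε * (4 * (16 * coeffRatio Q r) ^ r * ((n : ℝ) ^ β) ^ 2)
      = 4 * (16 * coeffRatio Q r) ^ r * coeffNorm Q r ^ ε * ((n : ℝ) ^ β) ^ 2 := by ring
    _ ≤ 4 * (16 * coeffRatio Q r) ^ r * coeffNorm Q r ^ ε *
        (2 * N : ℝ) ^ (2 * (N : ℝ) ^ (1 / 20 : ℝ)) := by gcongr
    _ ≤ (N ! : ℝ) ^ ε := hN.mul_rpow_le_factorial_rpow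
    _ ≤ (coeffNorm Q r * (x : ℝ) ^ r) ^ ε := by gcongr
    _ = coeffNorm Q r ^ ε * ((x : ℝ) ^ ε) ^ r := by
      rw [mul_rpow hD.le (by positivity), rpow_pow_comm (by positivity)]

theorem exists_abs_prod_rpow_sub_le (hr : 2 ≤ r) (hQ : Q.natDegree ≤ r)
    (hc : Q.coeff (r - 1) = 0) (ha : Q.coeff r ≠ 0) (hs : 1 ≤ |s|) (hε : 0 ≤ ε) {y : ℕ}
    (hrβ : r ∣ β) (hβN : (β : ℝ) ≤ (N : ℝ) ^ (1 / 20 : ℝ)) (hNn : N ≤ n) (hn : n < 2 * N)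
    (hx : 0 < x) (hy : 0 < y) (hQx : Q.eval (x : ℝ) = s * n !)
    (hQy : Q.eval (y : ℝ) = s * (n - β)!) :
    ∃ p : ℤ, |∏ j ∈ Icc 1 (β - 1), (1 - (j : ℝ) / n) ^ (-(1 : ℝ) / r) - p / x| ≤
      (x : ℝ) ^ (ε - 2) := by
  have hβn := hN.two_mul_sq_le hβN hNn
  have hβ : β ≤ β ^ 2 := Nat.le_self_pow two_ne_zero β
  refine exists_abs_prod_rpow_sub_le_of_eval_eq_descFactorial_mul hr hQ hc ha (by omega) hrβ hβn
    hx hy ?_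
    (hN.le_sq hQ ha (by omega) hs (by omega) hx hQx)
    (hN.le_sq hQ ha (by omega) hs (by omega) hy hQy)
    (hN.pow_le_rpow_pow hQ ha hs hε hβN hNn hn hx hQx)
  rw [hQx, hQy, ← Nat.factorial_mul_descFactorial (show β ≤ n by omega)]
  push_cast
  ring

end IsSufficientlyLarge

end

/-- **Solutions imply simultaneous rational approximation** (Lemma 3.3).
Let `P ∈ ℤ[x]` have degree `r ≥ 2` with the coefficient of `x^(r−1)` equal to zero, and let
`s ≠ 0` be an integer. For every `ε > 0` there is `N₀` such that for all `N ≥ N₀`: with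
`θ ∈ [1/1000, 1/20]`, `M = ⌊N^θ⌋`, `β₁ < β₂` positive multiples of `r` with
`r ≤ β₁ < β₂ ≤ M`, if `n ∈ [N, 2N)` and positive integers `x, x₁, x₂` satisfy
`s·n! = P(x)`, `s·(n−β₁)! = P(x₁)`, `s·(n−β₂)! = P(x₂)`, then for each `i ∈ {1,2}` there is an
integer `pᵢ` with `|∏_{j=1}^{βᵢ−1} (1 − j/n)^(−1/r) − pᵢ/x| ≤ x^(ε−2)`. -/
theorem solutions_imply_simultaneous_rational_approximation
    (P : Polynomial ℤ) (r : ℕ) (hr : 2 ≤ r) (hdeg : P.natDegree = r)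
    (hcoeff : P.coeff (r - 1) = 0) (s : ℤ) (hs : s ≠ 0)
    (ε : ℝ) (hε : 0 < ε) :
    ∃ N₀ : ℕ, ∀ N : ℕ, N₀ ≤ N →
      ∀ θ : ℝ, 1 / 1000 ≤ θ → θ ≤ 1 / 20 →
      ∀ M : ℕ, M = ⌊(N : ℝ) ^ θ⌋₊ →
      ∀ β₁ β₂ : ℕ, r ∣ β₁ → r ∣ β₂ → r ≤ β₁ → β₁ < β₂ → β₂ ≤ M →
      ∀ n : ℕ, N ≤ n → n < 2 * N →
      ∀ x x₁ x₂ : ℕ, 0 < x → 0 < x₁ → 0 < x₂ →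
        s * (n ! : ℤ) = P.eval (x : ℤ) →
        s * ((n - β₁)! : ℤ) = P.eval (x₁ : ℤ) →
        s * ((n - β₂)! : ℤ) = P.eval (x₂ : ℤ) →
        ∀ β ∈ ({β₁, β₂} : Set ℕ), ∃ p : ℤ,
          |(∏ j ∈ Finset.Icc 1 (β - 1), (1 - (j : ℝ) / n) ^ (-(1 : ℝ) / r))
              - (p : ℝ) / x| ≤ (x : ℝ) ^ (ε - 2) := by
  set Q := P.map (Int.castRingHom ℝ)
  have hQ : Q.natDegree ≤ r := Polynomial.natDegree_map_le.trans hdeg.le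
  have hc : Q.coeff (r - 1) = 0 := by simp [Q, hcoeff]
  have ha : Q.coeff r ≠ 0 := by
    have : P ≠ 0 := by rintro rfl; simp at hdeg; omega
    simpa [Q, ← hdeg] using this
  have hs' : (1 : ℝ) ≤ |(s : ℝ)| := by exact_mod_cast Int.one_le_abs hs
  have hcast {k z : ℕ} (h : s * (k : ℤ) = P.eval (z : ℤ)) : Q.eval (z : ℝ) = s * k := by
    rw [show (z : ℝ) = ((z : ℤ) : ℝ) by norm_cast, Polynomial.eval_intCast_map, Int.cast_id, ← h]
    simp
  obtain ⟨N₀, hN₀⟩ := eventually_atTop.1 (eventually_isSufficientlyLarge ha hε)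
  refine ⟨N₀, fun N hN θ _ hθ M hM β₁ β₂ hrβ₁ hrβ₂ _ hβ₁₂ hβ₂M n hNn hn x x₁ x₂ hx hx₁ hx₂
    hPx hPx₁ hPx₂ β hβ => ?_⟩
  have hβN {β : ℕ} (hβ : β ≤ M) : (β : ℝ) ≤ (N : ℝ) ^ (1 / 20 : ℝ) := by
    have hN1 : (1 : ℝ) ≤ N := by exact_mod_cast (show 1 ≤ N by omega)
    calc (β : ℝ) ≤ M := by exact_mod_cast hβ
      _ ≤ (N : ℝ) ^ θ := hM ▸ Nat.floor_le (by positivity)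
      _ ≤ (N : ℝ) ^ (1 / 20 : ℝ) := rpow_le_rpow_of_exponent_le hN1 hθ
  rcases hβ with rfl | rfl
  · exact (hN₀ N hN).exists_abs_prod_rpow_sub_le hr hQ hc ha hs' hε.le
      hrβ₁ (hβN (hβ₁₂.le.trans hβ₂M)) hNn hn hx hx₁ (hcast hPx) (hcast hPx₁)
  · exact (hN₀ N hN).exists_abs_prod_rpow_sub_le hr hQ hc ha hs' hε.le
      hrβ₂ (hβN hβ₂M) hNn hn hx hx₂ (hcast hPx) (hcast hPx₂)
end

section
/- Let r ≥ 2 and k ≥ 0 be integers. Then the rational number r^k · (∏_{p prime, p ∣ r} p^(⌊k/(p−1)⌋)) · C(−1/r, k) is an integer, where C(−1/r, k) := (1/k!)·∏_{i=0}^{k−1} (−1/r − i) ∈ ℚ is the generalized binomial coefficient. -/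
/-!
Clearing the denominators `r` gives `r^k C(-1/r, k) = (-1)^k ∏_{i<k} (1 + i r) / k!`, so it
suffices that `k!` divides `N ∏_{i<k} (1 + i r)` with `N = ∏_{p ∣ r} p^⌊k/(p-1)⌋`. Primes dividing
`r` occur in `k!` at most `⌊k/(p-1)⌋` times by Legendre's formula, so `N` absorbs them. For the
part `M` of `k!` coprime to `r`, modulo `M` each factor is `1 + i r = r (s + i)` with `s ≡ r⁻¹`,
so the product is `r^k` times the rising factorial `s (s+1) ⋯ (s+k-1)`, which `k!` divides.
-/

/-- The generalized binomial coefficient `C(q, k) = q(q−1)⋯(q−k+1)/k!`. -/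
def genBinom (q : ℚ) (k : ℕ) : ℚ :=
  (∏ i ∈ Finset.range k, (q - i)) / (k.factorial : ℚ)

open Finset Nat

theorem Nat.dvd_prod_add_mul_of_dvd_factorial {M a r k : ℕ} (hrM : r.Coprime M) (hM : M ∣ k !) :
    M ∣ ∏ i ∈ range k, (a + i * r) := by
  have : NeZero M := ⟨ne_zero_of_dvd_ne_zero (factorial_ne_zero k) hM⟩
  set s : ℕ := ((r : ZMod M)⁻¹ * a).val
  have hfactor (i : ℕ) : ((a + i * r : ℕ) : ZMod M) = r * ((s + i : ℕ) : ZMod M) := by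
    have hinv : (r : ZMod M) * (r : ZMod M)⁻¹ = 1 := ZMod.coe_mul_inv_eq_one r hrM
    rw [Nat.cast_add s, ZMod.natCast_zmod_val]
    push_cast
    linear_combination -(a : ZMod M) * hinv
  have hasc : ((s.ascFactorial k : ℕ) : ZMod M) = 0 :=
    (ZMod.natCast_eq_zero_iff _ M).mpr (hM.trans (factorial_dvd_ascFactorial s k))
  rw [← ZMod.natCast_eq_zero_iff, Nat.cast_prod, prod_congr rfl fun i _ => hfactor i,
    ← pow_card_mul_prod, ← Nat.cast_prod, ← ascFactorial_eq_prod_range, hasc, mul_zero]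

theorem Nat.factorial_dvd_prod_pow_primeFactors_mul_prod_one_add_mul {r : ℕ} (hr : r ≠ 0) (k : ℕ) :
    k ! ∣ (∏ p ∈ r.primeFactors, p ^ (k / (p - 1))) * ∏ i ∈ range k, (1 + i * r) := by
  rw [dvd_iff_prime_pow_dvd_dvd]
  intro q j hq hqj
  by_cases hqr : q ∣ r
  · have hj : j ≤ k / (q - 1) :=
      ((hq.pow_dvd_iff_le_factorization (factorial_ne_zero k)).mp hqj).trans
        (factorization_factorial_le_div_pred hq k)
    have hqN : q ^ (k / (q - 1)) ∣ ∏ p ∈ r.primeFactors, p ^ (k / (p - 1)) :=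
      dvd_prod_of_mem (fun p => p ^ (k / (p - 1))) (mem_primeFactors.mpr ⟨hq, hqr, hr⟩)
    exact ((pow_dvd_pow q hj).trans hqN).mul_right _
  · exact (dvd_prod_add_mul_of_dvd_factorial
      ((hq.coprime_iff_not_dvd.mpr hqr).pow_left j).symm hqj).mul_left _

theorem pow_mul_genBinom_neg_one_div {r : ℚ} (hr : r ≠ 0) (k : ℕ) :
    r ^ k * genBinom (-1 / r) k = (-1) ^ k * (∏ i ∈ range k, (1 + i * r)) / k ! := by
  have hprod : r ^ k * ∏ i ∈ range k, (-1 / r - i) = (-1) ^ k * ∏ i ∈ range k, (1 + i * r) :=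
    calc r ^ k * ∏ i ∈ range k, (-1 / r - i)
        = ∏ i ∈ range k, r * (-1 / r - i) := by rw [← pow_card_mul_prod, card_range]
      _ = ∏ i ∈ range k, -1 * (1 + i * r) := prod_congr rfl fun i _ => by field_simp; ring
      _ = (-1) ^ k * ∏ i ∈ range k, (1 + i * r) := by rw [← pow_card_mul_prod, card_range]
  rw [genBinom, mul_div_assoc', hprod]

/-- **Denominators of binomial coefficients** (Lemma 4.1).
Let `r ≥ 2` and `k ≥ 0` be integers. Then
`r^k · (∏_{p prime, p ∣ r} p^(⌊k/(p−1)⌋)) · C(−1/r, k)` is an integer. -/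
theorem denominator_of_binomial_coefficient (r : ℕ) (hr : 2 ≤ r) (k : ℕ) :
    ∃ m : ℤ,
      (r : ℚ) ^ k * (∏ p ∈ r.primeFactors, (p : ℚ) ^ (k / (p - 1)))
          * genBinom (-1 / r) k = (m : ℚ) := by
  obtain ⟨c, hc⟩ := factorial_dvd_prod_pow_primeFactors_mul_prod_one_add_mul (by omega : r ≠ 0) k
  refine ⟨(-1) ^ k * c, ?_⟩
  have hc' : (∏ p ∈ r.primeFactors, (p : ℚ) ^ (k / (p - 1))) * ∏ i ∈ range k, (1 + i * (r : ℚ))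
      = k ! * c := by exact_mod_cast hc
  rw [mul_right_comm, pow_mul_genBinom_neg_one_div (by positivity), mul_comm, ← mul_div_assoc,
    mul_left_comm, hc']
  field_simp
  push_cast
  ring
end

section
/- Let M and N be positive integers with M < N, let A ≥ 1 be a real number, and let a_{i,j} (1 ≤ i ≤ M, 1 ≤ j ≤ N) be integers with |a_{i,j}| ≤ A. Then there exist integers X_1, …, X_N, not all zero, such that Σ_{j=1}^{N} a_{i,j}·X_j = 0 for every 1 ≤ i ≤ M, and |X_j| ≤ (3AN)^(M/(N−M)) for every j. -/
attribute [local instance] Matrix.seminormedAddCommGroup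

open Matrix

theorem Int.Matrix.exists_ne_zero_int_vec_abs_le {α β : Type*} [Fintype α] [Fintype β]
    (A : Matrix α β ℤ) (hn : Fintype.card α < Fintype.card β) (hm : 0 < Fintype.card α)
    {B : ℝ} (hB : 1 ≤ B) (hA : ∀ i j, |(A i j : ℝ)| ≤ B) :
    ∃ t : β → ℤ, t ≠ 0 ∧ A *ᵥ t = 0 ∧ ∀ j, |(t j : ℝ)| ≤
      (Fintype.card β * B) ^ ((Fintype.card α : ℝ) / (Fintype.card β - Fintype.card α)) := by
  obtain ⟨t, ht0, hAt, ht⟩ := exists_ne_zero_int_vec_norm_le A hn hm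
  have hnormA : max 1 ‖A‖ ≤ B :=
    max_le hB <| (norm_le_iff (zero_le_one.trans hB)).2 fun i j => by
      simpa [Int.norm_eq_abs] using hA i j
  have hexp : (0 : ℝ) ≤ (Fintype.card α : ℝ) / (Fintype.card β - Fintype.card α) :=
    div_nonneg (Nat.cast_nonneg _) (sub_nonneg.2 (mod_cast hn.le))
  refine ⟨t, ht0, hAt, fun j => ?_⟩
  calc |(t j : ℝ)| = ‖t j‖ := (Int.norm_eq_abs _).symm
    _ ≤ ‖t‖ := norm_le_pi_norm t j
    _ ≤ _ := ht
    _ ≤ _ := by gcongr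

/-- **Siegel's lemma** (Lemma 4.3).
Let `M < N` be positive integers, `A ≥ 1` a real number, and let `a_{i,j}` be integers with
`|a_{i,j}| ≤ A`. Then there exist integers `X_1, …, X_N`, not all zero, solving the system
`Σ_j a_{i,j} X_j = 0` for all `i`, with `|X_j| ≤ (3AN)^(M/(N−M))`. -/
theorem siegel_lemma (M N : ℕ) (hM : 0 < M) (hMN : M < N)
    (A : ℝ) (hA : 1 ≤ A) (a : Fin M → Fin N → ℤ)
    (ha : ∀ i j, |((a i j : ℤ) : ℝ)| ≤ A) :
    ∃ X : Fin N → ℤ, X ≠ 0 ∧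
      (∀ i, ∑ j, a i j * X j = 0) ∧
      ∀ j, |((X j : ℤ) : ℝ)| ≤ (3 * A * N) ^ ((M : ℝ) / ((N : ℝ) - (M : ℝ))) := by
  obtain ⟨X, hX0, hsol, hX⟩ := Int.Matrix.exists_ne_zero_int_vec_abs_le (Matrix.of a)
    (by simpa using hMN) (by simpa using hM) hA ha
  simp only [Fintype.card_fin] at hX
  have hexp : (0 : ℝ) ≤ (M : ℝ) / ((N : ℝ) - M) :=
    div_nonneg (Nat.cast_nonneg M) (sub_nonneg.2 (mod_cast hMN.le))
  refine ⟨X, hX0, fun i => by simpa [mulVec, dotProduct] using congrFun hsol i, fun j => ?_⟩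
  -- Mathlib's pigeonhole bound has the sharper base `N * A`.
  calc |(X j : ℝ)| ≤ (N * A) ^ ((M : ℝ) / ((N : ℝ) - M)) := hX j
    _ ≤ (3 * A * N) ^ ((M : ℝ) / ((N : ℝ) - M)) :=
        Real.rpow_le_rpow (by positivity) (by nlinarith [N.cast_nonneg (α := ℝ)]) hexp
end

section
/- Let r ≥ 2 and M ≥ 2 be integers and let β_1, β_2 be integers with 2 ≤ β_1 < β_2 ≤ M. Set T(X) := r·∏_{j=1}^{M}(1−jX) ∈ ℤ[X], B_0 := 0, and B_{β_i}(X) := Σ_{j=1}^{β_i−1} j·∏_{1≤j'≤M, j'≠j}(1−j'X) ∈ ℤ[X] for i = 1, 2. Let D ≥ 0 and let P_0, P_1, P_2 ∈ ℤ[X] have degree ≤ D. Define P_i^{[0]} := P_i and P_i^{[k+1]} := T·(P_i^{[k]})′ + B_{β_i}·P_i^{[k]} (with B_{β_0} meaning B_0 = 0), and define R^{[k]} ∈ ℚ[[X]] by R^{[0]} := P_0 + P_1·ω_{r,β_1} + P_2·ω_{r,β_2} and R^{[k+1]} := T·(d/dX)R^{[k]}, where d/dX is the formal derivative on ℚ[[X]].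 Then for every k ≥ 0: (1) each P_i^{[k]} has integer coefficients; (2) deg(P_i^{[k]}) ≤ D + k·M; (3) R^{[k]} = P_0^{[k]} + P_1^{[k]}·ω_{r,β_1} + P_2^{[k]}·ω_{r,β_2} in ℚ[[X]]. -/
/-- The formal power series `ω_{r,β} ∈ ℚ[[X]]`, the Taylor expansion at `0` of
`∏_{j=1}^{β−1} (1−jx)^(−1/r)`. -/
noncomputable def omegaPS (r β : ℕ) : PowerSeries ℚ :=
  ∏ j ∈ Finset.Icc 1 (β - 1),
    PowerSeries.mk (fun k => (-1) ^ k * genBinom (-1 / r) k * (j : ℚ) ^ k)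

/-- `T(X) = r·∏_{j=1}^{M} (1−jX) ∈ ℤ[X]`. -/
noncomputable def Tpoly (r M : ℕ) : Polynomial ℤ :=
  Polynomial.C (r : ℤ) * ∏ j ∈ Finset.Icc 1 M, (1 - Polynomial.C (j : ℤ) * Polynomial.X)

/-- `B_β(X) = Σ_{j=1}^{β−1} j·∏_{1≤j'≤M, j'≠j} (1−j'X) ∈ ℤ[X]` (equal to `T·A_β`). -/
noncomputable def Bpoly (M β : ℕ) : Polynomial ℤ :=
  ∑ j ∈ Finset.Icc 1 (β - 1),
    Polynomial.C (j : ℤ) *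
      ∏ j' ∈ (Finset.Icc 1 M).erase j, (1 - Polynomial.C (j' : ℤ) * Polynomial.X)

/-- The polynomials `P^{[k]}`, defined by `P^{[0]} = P`, `P^{[k+1]} = T·(P^{[k]})′ + B·P^{[k]}`. -/
noncomputable def Pbr (T B P : Polynomial ℤ) : ℕ → Polynomial ℤ
  | 0 => P
  | k + 1 => T * Polynomial.derivative (Pbr T B P k) + B * Pbr T B P k

/-- The coercion of an integer polynomial into `ℚ[[X]]`. -/
noncomputable def intPolyToPS (p : Polynomial ℤ) : PowerSeries ℚ :=
  ((p.map (Int.castRingHom ℚ) : Polynomial ℚ) : PowerSeries ℚ)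

/-- The power series `R^{[k]}`, with `R^{[0]} = R0` and `R^{[k+1]} = T·(d/dX)R^{[k]}`. -/
noncomputable def Rbr (r M : ℕ) (R0 : PowerSeries ℚ) : ℕ → PowerSeries ℚ
  | 0 => R0
  | k + 1 => intPolyToPS (Tpoly r M) * PowerSeries.derivativeFun (Rbr r M R0 k)

/-!
Write `ω_{r,β} = ∏_{j=1}^{β-1} f_j` with `f_j = (1 - jX)^{-1/r}`. The binomial series satisfies
`r(1 - jX)·f_j′ = j·f_j`, so by the Leibniz rule `T·ω′ = B_β·ω` as long as `β ≤ M`: each factor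
`1 - jX` of `T` cancels against the logarithmic derivative of `f_j`. Consequently the operator
`R ↦ T·R′` sends `P·ω` to `(T·P′ + B_β·P)·ω`, which is exactly the recursion defining `P^{[k]}`;
with `ω = 1` and `B = 0` the same holds for `P₀`. The degree bound is immediate from
`deg T, deg B_β ≤ M`.
-/

open Finset
open scoped PowerSeries Polynomial

section Derivation

variable {R A : Type*} [CommSemiring R] [CommSemiring A] [Algebra R A] (d : Derivation R A A)

theorem Derivation.mul_apply_mul_of_mul_apply_eq {t b ω : A} (h : t * d ω = b * ω) (p : A) :
    t * d (p * ω) = (t * d p + b * p) * ω := by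
  calc t * d (p * ω) = p * (t * d ω) + t * d p * ω := by
        rw [d.leibniz, smul_eq_mul, smul_eq_mul]; ring
    _ = (t * d p + b * p) * ω := by rw [h]; ring

theorem Derivation.prod_mul_apply_prod {ι : Type*} [DecidableEq ι] {L f c : ι → A}
    {s u : Finset ι} (hsu : s ⊆ u) (h : ∀ j ∈ s, L j * d (f j) = c j * f j) :
    (∏ j ∈ u, L j) * d (∏ j ∈ s, f j) = (∑ j ∈ s, c j * ∏ i ∈ u.erase j, L i) * ∏ j ∈ s, f j := by
  induction s using Finset.induction_on with
  | empty => simp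
  | @insert a s ha ih =>
    have hau : a ∈ u := hsu (mem_insert_self a s)
    have ih := ih ((subset_insert a s).trans hsu) fun j hj => h j (mem_insert_of_mem hj)
    have ha' := h a (mem_insert_self a s)
    rw [prod_insert ha, sum_insert ha, d.leibniz, smul_eq_mul, smul_eq_mul,
      ← mul_prod_erase u L hau]
    calc L a * (∏ i ∈ u.erase a, L i) * (f a * d (∏ j ∈ s, f j) + (∏ j ∈ s, f j) * d (f a))
        = f a * ((L a * ∏ i ∈ u.erase a, L i) * d (∏ j ∈ s, f j))
          + (∏ j ∈ s, f j) * (∏ i ∈ u.erase a, L i) * (L a * d (f a)) := by ring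
      _ = _ := by rw [mul_prod_erase u L hau, ih, ha']; ring

end Derivation

theorem genBinom_succ_mul (q : ℚ) (n : ℕ) :
    genBinom q (n + 1) * (n + 1) = genBinom q n * (q - n) := by
  have hn : (n + 1 : ℚ) ≠ 0 := by positivity
  simp only [genBinom, prod_range_succ, Nat.factorial_succ, Nat.cast_mul, Nat.cast_succ]
  field_simp

noncomputable def binomSeries (q a : ℚ) : ℚ⟦X⟧ :=
  PowerSeries.mk fun k => genBinom q k * a ^ k

theorem PowerSeries.coeff_X_mul_derivative {R : Type*} [CommSemiring R] (f : R⟦X⟧) (n : ℕ) :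
    coeff n (X * d⁄dX R f) = n * coeff n f := by
  cases n with
  | zero => simp
  | succ m => rw [coeff_succ_X_mul, coeff_derivative]; push_cast; ring

theorem one_add_C_mul_X_mul_derivative_binomSeries (q a : ℚ) :
    (1 + PowerSeries.C a * PowerSeries.X) * d⁄dX ℚ (binomSeries q a)
      = PowerSeries.C (q * a) * binomSeries q a := by
  ext n
  rw [add_mul, one_mul, map_add, mul_assoc, PowerSeries.coeff_C_mul,
    PowerSeries.coeff_X_mul_derivative, PowerSeries.coeff_derivative, PowerSeries.coeff_C_mul]
  simp only [binomSeries, PowerSeries.coeff_mk]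
  linear_combination a ^ (n + 1) * genBinom_succ_mul q n

theorem omegaPS_eq_prod_binomSeries (r β : ℕ) :
    omegaPS r β = ∏ j ∈ Icc 1 (β - 1), binomSeries (-1 / r) (-j) := by
  refine prod_congr rfl fun j _ => PowerSeries.ext fun k => ?_
  simp only [binomSeries, PowerSeries.coeff_mk, neg_pow (j : ℚ)]
  ring

theorem one_sub_C_mul_X_mul_derivative_binomSeries (r j : ℕ) :
    (1 - PowerSeries.C (j : ℚ) * PowerSeries.X) * d⁄dX ℚ (binomSeries (-1 / r) (-j))
      = PowerSeries.C ((j : ℚ) / r) * binomSeries (-1 / r) (-j) := by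
  have h := one_add_C_mul_X_mul_derivative_binomSeries (-1 / r) (-j)
  rwa [map_neg, neg_mul, ← sub_eq_add_neg, show (-1 / r : ℚ) * -j = j / r by ring] at h

noncomputable def intPolyToPSHom : ℤ[X] →+* ℚ⟦X⟧ :=
  Polynomial.coeToPowerSeries.ringHom.comp (Polynomial.mapRingHom (Int.castRingHom ℚ))

theorem intPolyToPSHom_apply (p : ℤ[X]) : intPolyToPSHom p = intPolyToPS p := rfl

theorem intPolyToPSHom_X : intPolyToPSHom Polynomial.X = PowerSeries.X := by
  simp [intPolyToPSHom, Polynomial.coeToPowerSeries.ringHom]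

theorem intPolyToPS_add (p q : ℤ[X]) : intPolyToPS (p + q) = intPolyToPS p + intPolyToPS q :=
  map_add intPolyToPSHom p q

theorem intPolyToPS_mul (p q : ℤ[X]) : intPolyToPS (p * q) = intPolyToPS p * intPolyToPS q :=
  map_mul intPolyToPSHom p q

theorem derivative_intPolyToPS (p : ℤ[X]) :
    d⁄dX ℚ (intPolyToPS p) = intPolyToPS (Polynomial.derivative p) := by
  rw [intPolyToPS, PowerSeries.derivative_coe, Polynomial.derivative_map, intPolyToPS]

theorem intPolyToPS_Tpoly (r M : ℕ) :
    intPolyToPS (Tpoly r M) = PowerSeries.C (r : ℚ) *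
      ∏ j ∈ Icc 1 M, (1 - PowerSeries.C (j : ℚ) * PowerSeries.X) := by
  simp [← intPolyToPSHom_apply, Tpoly, map_prod, intPolyToPSHom_X]

theorem intPolyToPS_Bpoly (M β : ℕ) :
    intPolyToPS (Bpoly M β) = ∑ j ∈ Icc 1 (β - 1), PowerSeries.C (j : ℚ) *
      ∏ i ∈ (Icc 1 M).erase j, (1 - PowerSeries.C (i : ℚ) * PowerSeries.X) := by
  simp [← intPolyToPSHom_apply, Bpoly, map_prod, intPolyToPSHom_X]

theorem Tpoly_mul_derivative_omegaPS {r M β : ℕ} (hr : r ≠ 0) (hβ : β ≤ M) :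
    intPolyToPS (Tpoly r M) * d⁄dX ℚ (omegaPS r β) = intPolyToPS (Bpoly M β) * omegaPS r β := by
  have hsub : Icc 1 (β - 1) ⊆ Icc 1 M := Icc_subset_Icc_right (by omega)
  have hr' : (r : ℚ) ≠ 0 := Nat.cast_ne_zero.mpr hr
  rw [intPolyToPS_Tpoly, intPolyToPS_Bpoly, omegaPS_eq_prod_binomSeries, mul_assoc,
    Derivation.prod_mul_apply_prod _ hsub fun j _ => one_sub_C_mul_X_mul_derivative_binomSeries r j,
    ← mul_assoc, mul_sum]
  simp_rw [← mul_assoc, ← map_mul, mul_div_cancel₀ _ hr']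

theorem intPolyToPS_mul_derivative_Pbr_mul {T B : ℤ[X]} {ω : ℚ⟦X⟧}
    (h : intPolyToPS T * d⁄dX ℚ ω = intPolyToPS B * ω) (P : ℤ[X]) (k : ℕ) :
    intPolyToPS T * d⁄dX ℚ (intPolyToPS (Pbr T B P k) * ω) = intPolyToPS (Pbr T B P (k + 1)) * ω := by
  rw [Derivation.mul_apply_mul_of_mul_apply_eq _ h, derivative_intPolyToPS, Pbr,
    intPolyToPS_add, intPolyToPS_mul, intPolyToPS_mul]

theorem Polynomial.natDegree_prod_one_sub_C_mul_X_le {R ι : Type*} [CommRing R]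
    (s : Finset ι) (a : ι → R) : (∏ j ∈ s, (1 - C (a j) * X)).natDegree ≤ #s := by
  have h (j : ι) : (1 - C (a j) * X).natDegree ≤ 1 := by
    simpa [sub_eq_add_neg, add_comm] using natDegree_linear_le (a := -a j) (b := 1)
  simpa using (natDegree_prod_le _ _).trans (sum_le_card_nsmul s _ 1 fun j _ => h j)

theorem natDegree_Tpoly_le (r M : ℕ) : (Tpoly r M).natDegree ≤ M := by
  refine (Polynomial.natDegree_C_mul_le _ _).trans ?_
  simpa using Polynomial.natDegree_prod_one_sub_C_mul_X_le (Icc 1 M) fun j => (j : ℤ)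

theorem natDegree_Bpoly_le (M β : ℕ) : (Bpoly M β).natDegree ≤ M := by
  refine Polynomial.natDegree_sum_le_of_forall_le _ _ fun j _ => ?_
  have hcard : #((Icc 1 M).erase j) ≤ M := (card_erase_le).trans (by simp)
  exact (Polynomial.natDegree_C_mul_le _ _).trans
    ((Polynomial.natDegree_prod_one_sub_C_mul_X_le _ _).trans hcard)

theorem natDegree_Pbr_le {T B P : ℤ[X]} {M D : ℕ} (hT : T.natDegree ≤ M) (hB : B.natDegree ≤ M)
    (hP : P.natDegree ≤ D) (k : ℕ) : (Pbr T B P k).natDegree ≤ D + k * M := by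
  induction k with
  | zero => simpa [Pbr] using hP
  | succ k ih =>
    have hP' := (Polynomial.natDegree_derivative_le (Pbr T B P k)).trans (Nat.sub_le _ 1)
    have hM : M + (D + k * M) = D + (k + 1) * M := by ring
    rw [Pbr]
    refine (Polynomial.natDegree_add_le _ _).trans (max_le ?_ ?_)
    · exact Polynomial.natDegree_mul_le.trans (hM ▸ add_le_add hT (hP'.trans ih))
    · exact Polynomial.natDegree_mul_le.trans (hM ▸ add_le_add hB ih)

theorem Rbr_succ (r M : ℕ) (R₀ : ℚ⟦X⟧) (k : ℕ) :
    Rbr r M R₀ (k + 1) = intPolyToPS (Tpoly r M) * d⁄dX ℚ (Rbr r M R₀ k) := rfl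

theorem properties_of_bracket_pade_general (r M : ℕ) (hr : 2 ≤ r)
    (β₁ β₂ : ℕ) (hβ₁₂ : β₁ < β₂) (hβ₂ : β₂ ≤ M)
    (D : ℕ) (P₀ P₁ P₂ : Polynomial ℤ)
    (h₀ : P₀.natDegree ≤ D) (h₁ : P₁.natDegree ≤ D) (h₂ : P₂.natDegree ≤ D)
    (k : ℕ) :
    (∀ Q ∈ [Pbr (Tpoly r M) 0 P₀ k, Pbr (Tpoly r M) (Bpoly M β₁) P₁ k,
        Pbr (Tpoly r M) (Bpoly M β₂) P₂ k],
      (∀ n : ℕ, ∃ m : ℤ, Q.coeff n = m) ∧ Q.natDegree ≤ D + k * M) ∧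
    Rbr r M (intPolyToPS P₀ + intPolyToPS P₁ * omegaPS r β₁
        + intPolyToPS P₂ * omegaPS r β₂) k
      = intPolyToPS (Pbr (Tpoly r M) 0 P₀ k)
        + intPolyToPS (Pbr (Tpoly r M) (Bpoly M β₁) P₁ k) * omegaPS r β₁
        + intPolyToPS (Pbr (Tpoly r M) (Bpoly M β₂) P₂ k) * omegaPS r β₂ := by
  refine ⟨?_, ?_⟩
  · simp only [List.mem_cons, List.not_mem_nil, or_false]
    rintro Q (rfl | rfl | rfl) <;> refine ⟨fun n => ⟨_, rfl⟩, ?_⟩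
    · exact natDegree_Pbr_le (natDegree_Tpoly_le r M) (by simp) h₀ k
    · exact natDegree_Pbr_le (natDegree_Tpoly_le r M) (natDegree_Bpoly_le M β₁) h₁ k
    · exact natDegree_Pbr_le (natDegree_Tpoly_le r M) (natDegree_Bpoly_le M β₂) h₂ k
  · have hω₀ : intPolyToPS (Tpoly r M) * d⁄dX ℚ 1 = intPolyToPS 0 * 1 := by
      simp [intPolyToPS]
    have hω₁ := Tpoly_mul_derivative_omegaPS (r := r) (by omega) (hβ₁₂.le.trans hβ₂)
    have hω₂ := Tpoly_mul_derivative_omegaPS (r := r) (by omega) hβ₂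
    induction k with
    | zero => rfl
    | succ k ih =>
      rw [Rbr_succ, ih, ← mul_one (intPolyToPS (Pbr _ 0 P₀ k)), map_add, map_add, mul_add, mul_add,
        intPolyToPS_mul_derivative_Pbr_mul hω₀, intPolyToPS_mul_derivative_Pbr_mul hω₁,
        intPolyToPS_mul_derivative_Pbr_mul hω₂, mul_one]

/-- **Properties of `P_i^{[k]}` and `R^{[k]}`** (Lemma 5.2).
(1) each `P_i^{[k]}` has integer coefficients; (2) `deg(P_i^{[k]}) ≤ D + kM`;
(3) `R^{[k]} = P₀^{[k]} + P₁^{[k]}·ω_{r,β₁} + P₂^{[k]}·ω_{r,β₂}` in `ℚ[[X]]`. -/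
theorem properties_of_bracket_pade (r M : ℕ) (hr : 2 ≤ r) (hM : 2 ≤ M)
    (β₁ β₂ : ℕ) (hβ₁ : 2 ≤ β₁) (hβ₁₂ : β₁ < β₂) (hβ₂ : β₂ ≤ M)
    (D : ℕ) (P₀ P₁ P₂ : Polynomial ℤ)
    (h₀ : P₀.natDegree ≤ D) (h₁ : P₁.natDegree ≤ D) (h₂ : P₂.natDegree ≤ D)
    (k : ℕ) :
    (∀ Q ∈ [Pbr (Tpoly r M) 0 P₀ k, Pbr (Tpoly r M) (Bpoly M β₁) P₁ k,
        Pbr (Tpoly r M) (Bpoly M β₂) P₂ k],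
      (∀ n : ℕ, ∃ m : ℤ, Q.coeff n = m) ∧ Q.natDegree ≤ D + k * M) ∧
    Rbr r M (intPolyToPS P₀ + intPolyToPS P₁ * omegaPS r β₁
        + intPolyToPS P₂ * omegaPS r β₂) k
      = intPolyToPS (Pbr (Tpoly r M) 0 P₀ k)
        + intPolyToPS (Pbr (Tpoly r M) (Bpoly M β₁) P₁ k) * omegaPS r β₁
        + intPolyToPS (Pbr (Tpoly r M) (Bpoly M β₂) P₂ k) * omegaPS r β₂ :=
  properties_of_bracket_pade_general r M hr β₁ β₂ hβ₁₂ hβ₂ D P₀ P₁ P₂ h₀ h₁ h₂ k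
end

section
/- Let r ≥ 2 and M ≥ 2 be integers and let β_1, β_2 be integers with 2 ≤ β_1 < β_2 ≤ M. Set T(X) := r·∏_{j=1}^{M}(1−jX) ∈ ℤ[X], B_0 := 0, and B_{β_i}(X) := Σ_{j=1}^{β_i−1} j·∏_{1≤j'≤M, j'≠j}(1−j'X) ∈ ℤ[X] for i = 1, 2. Suppose P_0, P_1, P_2 ∈ ℤ[X] are all nonzero polynomials, and define P_0^{[k]}, P_1^{[k]}, P_2^{[k]} by P_i^{[0]} := P_i and P_i^{[k+1]} := T·(P_i^{[k]})′ + B_{β_i}·P_i^{[k]} (with B_{β_0} meaning B_0 = 0). Then the determinant Δ of the 3×3 polynomial matrix whose (k,i) entry is P_i^{[k]} for 0 ≤ k, i ≤ 2 is not the zero polynomial. -/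
/-!
Over `ℚ⟦X⟧` put `ω₀ = 1` and let `ω_i` be the `r`-th root of `1 / ∏_{j<β_i} (1 - jX)`. Then
`T ω_i' = B_{β_i} ω_i`, hence `P_i^{[k]} ω_i = (T · d/dX)^k (P_i ω_i)` and
`ω₁ ω₂ Δ = T³ W(P₀, P₁ω₁, P₂ω₂)` with `W` the Wronskian. A vanishing Wronskian gives a
`ℚ`-linear relation between `P₀, P₁ω₁, P₂ω₂`. But `1, ω₁, ω₂` are linearly independent over
`ℚ[X]`: a relation `a ω = b ω'` between two of them, raised to the `r`-th power, reads
`b^r = a^r ∏_{β ≤ j < β'} (1 - jX)`, impossible as the right side has the simple root `1/β`;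
a relation between all three is reduced to this case by applying `T · d/dX` and eliminating.
-/

namespace PowerSeries

section CommRing

variable {R : Type*} [CommRing R]

theorem derivative_mul (f g : R⟦X⟧) : d⁄dX R (f * g) = f * d⁄dX R g + d⁄dX R f * g := by
  rw [Derivation.leibniz, smul_eq_mul, smul_eq_mul, mul_comm g]

theorem X_mul_derivative_X_pow (m : ℕ) : X * d⁄dX R (X ^ m) = (m : R⟦X⟧) * X ^ m := by
  rcases m with _ | m
  · simp
  · rw [derivative_pow, derivative_X]; push_cast; ring

theorem coe_mul_derivative_coe_mul {T B : Polynomial R} {ω : R⟦X⟧} (hω : T * d⁄dX R ω = B * ω)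
    (q : Polynomial R) :
    T * d⁄dX R (q * ω) = ((T * Polynomial.derivative q + B * q : Polynomial R) : R⟦X⟧) * ω := by
  rw [derivative_mul, derivative_coe]
  push_cast
  linear_combination (q : R⟦X⟧) * hω

theorem det_iterate_mul_derivative (g : R⟦X⟧) (f : Fin 3 → R⟦X⟧) :
    Matrix.det (Matrix.of fun k i : Fin 3 => (fun z => g * d⁄dX R z)^[k] (f i)) =
      g ^ 3 * Matrix.det (Matrix.of fun k i : Fin 3 => (d⁄dX R)^[k] (f i)) := by
  simp only [Matrix.det_fin_three, Matrix.of_apply, Fin.val_zero, Fin.val_one, Fin.val_two,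
    Function.iterate_zero, Function.iterate_succ, Function.comp_apply, id, derivative_mul]
  ring

theorem mul_derivative_eq_of_pow_mul_eq_one {ω f : R⟦X⟧} {r : ℕ} (h : ω ^ r * f = 1) :
    (r : R⟦X⟧) * f * d⁄dX R ω = -(d⁄dX R f * ω) := by
  rcases r with _ | s
  · rw [pow_zero, one_mul] at h
    simp [h]
  have hD : d⁄dX R (ω ^ (s + 1) * f) = 0 := by rw [h, derivative_one]
  rw [derivative_mul, derivative_pow, Nat.add_sub_cancel] at hD
  push_cast at hD ⊢
  linear_combination (ω * f) * hD - ((s + 1 : R⟦X⟧) * f * d⁄dX R ω + ω * d⁄dX R f) * h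

end CommRing

theorem exists_eq_X_pow_mul {R : Type*} [Semiring R] {f : R⟦X⟧} (hf : f ≠ 0) :
    ∃ (m : ℕ) (u : R⟦X⟧), constantCoeff u ≠ 0 ∧ f = X ^ m * u :=
  ⟨_, _, mt constantCoeff_divXPowOrder_eq_zero_iff.mp hf, X_pow_order_mul_divXPowOrder.symm⟩

section Field

variable {K : Type*} [Field K] [CharZero K]

theorem exists_eq_C_mul_of_constantCoeff_ne_zero {u v : K⟦X⟧} (hu : constantCoeff u ≠ 0)
    (h : u * d⁄dX K v = d⁄dX K u * v) : ∃ c, v = C c * u := by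
  have hinv : u * u⁻¹ = 1 := PowerSeries.mul_inv_cancel u hu
  have hD : d⁄dX K (v * u⁻¹) = 0 := by
    rw [derivative_mul, derivative_inv']
    linear_combination u⁻¹ ^ 2 * h - u⁻¹ * d⁄dX K v * hinv
  have hconst : v * u⁻¹ = C (constantCoeff (v * u⁻¹)) :=
    derivative.ext (by rw [hD, derivative_C]) (by rw [constantCoeff_C])
  exact ⟨_, by rw [← hconst, mul_assoc, mul_comm u⁻¹, hinv, mul_one]⟩

theorem exists_eq_C_mul_of_mul_derivative_eq {f g : K⟦X⟧} (hf : f ≠ 0)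
    (h : f * d⁄dX K g = d⁄dX K f * g) : ∃ c, g = C c * f := by
  rcases eq_or_ne g 0 with rfl | hg
  · exact ⟨0, by simp⟩
  obtain ⟨m, u, hu, rfl⟩ := exists_eq_X_pow_mul hf
  obtain ⟨n, v, hv, rfl⟩ := exists_eq_X_pow_mul hg
  -- `X · d/dX` acts on `X ^ m * u` as `m + X · d/dX` on `u`
  have hX : X ^ (m + n) *
      (((n : K⟦X⟧) - (m : K⟦X⟧)) * u * v + X * (u * d⁄dX K v - d⁄dX K u * v)) = 0 := by
    have := congrArg (X * ·) h
    simp only [derivative_mul] at this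
    linear_combination this - X ^ m * u * v * X_mul_derivative_X_pow (R := K) n
      + X ^ n * u * v * X_mul_derivative_X_pow (R := K) m
  have hX' := (mul_eq_zero.mp hX).resolve_left (pow_ne_zero _ X_ne_zero)
  have hnm : n = m := by
    have := congrArg constantCoeff hX'
    simp only [map_add, map_mul, map_sub, map_natCast, constantCoeff_X, zero_mul, add_zero,
      map_zero, mul_eq_zero, hu, hv, or_false, sub_eq_zero] at this
    exact_mod_cast this
  subst hnm
  obtain ⟨c, rfl⟩ := exists_eq_C_mul_of_constantCoeff_ne_zero hu
    (sub_eq_zero.mp (by simpa using hX'))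
  exact ⟨c, by ring⟩

theorem exists_linear_dependence_of_det_iterate_derivative_eq_zero {f : Fin 3 → K⟦X⟧}
    (hW : Matrix.det (Matrix.of fun k i : Fin 3 => (d⁄dX K)^[k] (f i)) = 0) :
    ∃ c : Fin 3 → K, c ≠ 0 ∧ ∑ i, C (c i) * f i = 0 := by
  simp only [Matrix.det_fin_three, Matrix.of_apply, Fin.val_zero, Fin.val_one, Fin.val_two,
    Function.iterate_zero, Function.iterate_succ, Function.comp_apply, id] at hW
  simp only [Fin.sum_univ_three]
  rcases eq_or_ne (f 0) 0 with hf | hf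
  · exact ⟨![1, 0, 0], by simp, by simp [hf]⟩
  set u := f 0 * d⁄dX K (f 1) - d⁄dX K (f 0) * f 1
  set v := f 0 * d⁄dX K (f 2) - d⁄dX K (f 0) * f 2
  have hDu : d⁄dX K u = f 0 * d⁄dX K (d⁄dX K (f 1)) - d⁄dX K (d⁄dX K (f 0)) * f 1 := by
    simp only [u, map_sub, derivative_mul]; ring
  have hDv : d⁄dX K v = f 0 * d⁄dX K (d⁄dX K (f 2)) - d⁄dX K (d⁄dX K (f 0)) * f 2 := by
    simp only [v, map_sub, derivative_mul]; ring
  rcases eq_or_ne u 0 with hu | hu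
  · obtain ⟨c, hc⟩ := exists_eq_C_mul_of_mul_derivative_eq hf (sub_eq_zero.mp hu)
    exact ⟨![c, -1, 0], by simp, by simp [hc]⟩
  -- `u * v' - u' * v = f 0 * W`, so `v` is a constant multiple of `u`
  obtain ⟨c, hc⟩ := exists_eq_C_mul_of_mul_derivative_eq hu (g := v)
    (by rw [hDu, hDv]; linear_combination f 0 * hW)
  obtain ⟨c', hc'⟩ := exists_eq_C_mul_of_mul_derivative_eq hf (g := f 2 - C c * f 1)
    (by simp only [map_sub, derivative_mul, derivative_C]; linear_combination hc)
  exact ⟨![-c', -c, 1], by simp, by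
    simp only [Matrix.cons_val_zero, Matrix.cons_val_one, Matrix.cons_val_two, Matrix.head_cons,
      Matrix.tail_cons, map_neg, map_one, neg_mul, one_mul]
    linear_combination hc'⟩

noncomputable def linearODECoeff (A : K⟦X⟧) : ℕ → K
  | 0 => 1
  | n + 1 => (∑ k ∈ Finset.range (n + 1), coeff k A * linearODECoeff A (n - k)) / (n + 1)
  decreasing_by omega

theorem exists_derivative_eq_mul (A : K⟦X⟧) :
    ∃ ω : K⟦X⟧, constantCoeff ω = 1 ∧ d⁄dX K ω = A * ω := by
  refine ⟨mk (linearODECoeff A), by simp [← coeff_zero_eq_constantCoeff_apply, linearODECoeff], ?_⟩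
  ext n
  rw [coeff_derivative, coeff_mk, linearODECoeff, coeff_mul,
    Finset.Nat.sum_antidiagonal_eq_sum_range_succ_mk,
    div_mul_cancel₀ _ (Nat.cast_add_one_ne_zero n)]
  simp only [coeff_mk]

theorem exists_pow_mul_eq_one {f : K⟦X⟧} (hf : constantCoeff f = 1) {r : ℕ} (hr : r ≠ 0) :
    ∃ ω : K⟦X⟧, ω ^ r * f = 1 := by
  have hinv : f * f⁻¹ = 1 := PowerSeries.mul_inv_cancel f (by simp [hf])
  have hr' : (r : K⟦X⟧) * C (r : K)⁻¹ = 1 := by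
    rw [← map_natCast C, ← map_mul, mul_inv_cancel₀ (by exact_mod_cast hr), map_one]
  -- `ω' = -(f' / (r f)) ω` makes `ω ^ r * f` constant
  obtain ⟨ω, hω0, hω⟩ := exists_derivative_eq_mul (-(C (r : K)⁻¹ * f⁻¹ * d⁄dX K f))
  refine ⟨ω, derivative.ext ?_ (by simp [hω0, hf])⟩
  rw [derivative_mul, derivative_pow, hω, derivative_one]
  obtain ⟨s, rfl⟩ := Nat.exists_eq_add_one_of_ne_zero hr
  rw [Nat.add_sub_cancel]
  push_cast at hr' ⊢
  linear_combination (-(ω ^ (s + 1) * d⁄dX K f * (f * f⁻¹))) * hr' - ω ^ (s + 1) * d⁄dX K f * hinv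

end Field

end PowerSeries

open Polynomial
open scoped PowerSeries

noncomputable def linFactor (j : ℕ) : ℚ[X] := 1 - C (j : ℚ) * X

-- `ω_{r,β}` is the power series `linFactorProd β ^ (-1/r)`.
noncomputable def linFactorProd (β : ℕ) : ℚ[X] := ∏ j ∈ Finset.Ico 1 β, linFactor j

theorem linFactor_ne_zero {j : ℕ} (hj : j ≠ 0) : linFactor j ≠ 0 := by
  intro h
  have := congrArg (coeff · 1) h
  simp [linFactor, coeff_one, hj] at this

theorem map_linFactor (j : ℕ) :
    (1 - C (j : ℤ) * X).map (Int.castRingHom ℚ) = linFactor j := by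
  simp [linFactor]

theorem linFactorProd_mul_prod_Ico {β β' : ℕ} (hβ : 1 ≤ β) (hββ' : β ≤ β') :
    linFactorProd β * ∏ j ∈ Finset.Ico β β', linFactor j = linFactorProd β' :=
  Finset.prod_Ico_consecutive _ hβ hββ'

theorem map_Tpoly {r M β : ℕ} (hβ : 1 ≤ β) (hβM : β ≤ M + 1) :
    (Tpoly r M).map (Int.castRingHom ℚ) =
      C (r : ℚ) * (linFactorProd β * ∏ j ∈ Finset.Ico β (M + 1), linFactor j) := by
  rw [linFactorProd_mul_prod_Ico hβ hβM, linFactorProd, Finset.Ico_add_one_right_eq_Icc, Tpoly,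
    Polynomial.map_mul, Polynomial.map_prod, map_C]
  simp only [map_linFactor, eq_intCast (Int.castRingHom ℚ), Int.cast_natCast]

theorem map_Tpoly_ne_zero {r : ℕ} (hr : r ≠ 0) (M : ℕ) :
    (Tpoly r M).map (Int.castRingHom ℚ) ≠ 0 := by
  rw [map_Tpoly le_rfl (by omega)]
  refine mul_ne_zero (by simpa using hr) (mul_ne_zero ?_ ?_) <;>
    exact Finset.prod_ne_zero_iff.mpr fun j hj =>
      linFactor_ne_zero (by rw [Finset.mem_Ico] at hj; omega)

theorem map_Bpoly {M β : ℕ} (hβ : 1 ≤ β) (hβM : β ≤ M + 1) :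
    (Bpoly M β).map (Int.castRingHom ℚ) =
      -derivative (linFactorProd β) * ∏ j ∈ Finset.Ico β (M + 1), linFactor j := by
  have hIcc : Finset.Icc 1 (β - 1) = Finset.Ico 1 β := by
    ext; simp only [Finset.mem_Icc, Finset.mem_Ico]; omega
  have herase : ∀ j ∈ Finset.Ico 1 β, ∏ i ∈ (Finset.Icc 1 M).erase j, linFactor i =
      (∏ i ∈ (Finset.Ico 1 β).erase j, linFactor i) * ∏ i ∈ Finset.Ico β (M + 1), linFactor i := by
    intro j hj
    have hjM : j ∈ Finset.Icc 1 M := by simp only [Finset.mem_Ico, Finset.mem_Icc] at hj ⊢; omega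
    refine mul_right_cancel₀ (linFactor_ne_zero (j := j) (by rw [Finset.mem_Ico] at hj; omega)) ?_
    rw [Finset.prod_erase_mul _ _ hjM, mul_right_comm, Finset.prod_erase_mul _ _ hj,
      ← Finset.Ico_add_one_right_eq_Icc, ← Finset.prod_Ico_consecutive _ (by omega) hβM]
  simp only [Bpoly, Polynomial.map_sum, Polynomial.map_mul, Polynomial.map_prod, map_linFactor,
    map_C, eq_intCast (Int.castRingHom ℚ), Int.cast_natCast, linFactorProd, derivative_prod_finset,
    hIcc]
  rw [← Finset.sum_neg_distrib, Finset.sum_mul]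
  refine Finset.sum_congr rfl fun j hj => ?_
  rw [herase j hj, linFactor, derivative_sub, derivative_one, derivative_C_mul_X]
  ring

theorem exists_pow_mul_linFactorProd_eq_one {r : ℕ} (hr : r ≠ 0) (β : ℕ) :
    ∃ ω : ℚ⟦X⟧, ω ^ r * (linFactorProd β : ℚ⟦X⟧) = 1 :=
  PowerSeries.exists_pow_mul_eq_one (by
    simp [constantCoeff_coe, coeff_zero_eq_eval_zero, linFactorProd, linFactor, eval_prod]) hr

theorem coe_map_Tpoly_mul_derivative {r M β : ℕ} (hβ : 1 ≤ β) (hβM : β ≤ M + 1) {ω : ℚ⟦X⟧}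
    (hω : ω ^ r * (linFactorProd β : ℚ⟦X⟧) = 1) :
    ((Tpoly r M).map (Int.castRingHom ℚ) : ℚ⟦X⟧) * d⁄dX ℚ ω =
      ((Bpoly M β).map (Int.castRingHom ℚ) : ℚ⟦X⟧) * ω := by
  have := PowerSeries.mul_derivative_eq_of_pow_mul_eq_one hω
  rw [PowerSeries.derivative_coe] at this
  rw [map_Tpoly hβ hβM, map_Bpoly hβ hβM]
  push_cast
  rw [map_natCast]
  linear_combination ((∏ j ∈ Finset.Ico β (M + 1), linFactor j : ℚ[X]) : ℚ⟦X⟧) * this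

theorem rootMultiplicity_prod_Ico_linFactor {β β' : ℕ} (hβ : 1 ≤ β) (hββ' : β < β') :
    rootMultiplicity (β : ℚ)⁻¹ (∏ j ∈ Finset.Ico β β', linFactor j) = 1 := by
  have hβ0 : (β : ℚ) ≠ 0 := by exact_mod_cast (by omega : β ≠ 0)
  have hself : linFactor β = C (-(β : ℚ)) * (X - C (β : ℚ)⁻¹) := by
    rw [linFactor, mul_sub, ← C_mul, neg_mul, mul_inv_cancel₀ hβ0, C_neg, C_neg, C_1]; ring
  have hrest : ¬ (∏ j ∈ Finset.Ico (β + 1) β', linFactor j).IsRoot (β : ℚ)⁻¹ := by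
    simp only [IsRoot, eval_prod, Finset.prod_eq_zero_iff, not_exists, not_and, linFactor,
      eval_sub, eval_one, eval_mul, eval_C, eval_X]
    intro j hj h
    rw [sub_eq_zero, eq_comm, mul_inv_eq_one₀ hβ0] at h
    rw [Finset.mem_Ico] at hj
    exact (show j ≠ β by omega) (by exact_mod_cast h)
  have hne : ∏ j ∈ Finset.Ico β β', linFactor j ≠ 0 :=
    Finset.prod_ne_zero_iff.mpr fun j hj => linFactor_ne_zero (by rw [Finset.mem_Ico] at hj; omega)
  rw [Finset.prod_eq_prod_Ico_succ_bot hββ'] at hne ⊢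
  rw [rootMultiplicity_mul hne, rootMultiplicity_eq_zero hrest,
    hself, rootMultiplicity_mul (hself ▸ linFactor_ne_zero (by omega)), rootMultiplicity_C,
    rootMultiplicity_X_sub_C_self]

theorem pow_ne_pow_mul_prod_Ico_linFactor {r β β' : ℕ} (hr : 2 ≤ r) (hβ : 1 ≤ β) (hββ' : β < β')
    {a b : ℚ[X]} (hb : b ≠ 0) : b ^ r ≠ a ^ r * ∏ j ∈ Finset.Ico β β', linFactor j := by
  intro h
  have hrhs : a ^ r * ∏ j ∈ Finset.Ico β β', linFactor j ≠ 0 := h ▸ pow_ne_zero r hb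
  have hpow : ∀ p : ℚ[X], rootMultiplicity (β : ℚ)⁻¹ (p ^ r) = r * rootMultiplicity (β : ℚ)⁻¹ p :=
    fun p => by simp only [← count_roots, roots_pow, Multiset.count_nsmul]
  -- compare multiplicities at `1/β`: they are `≡ 0` and `≡ 1` modulo `r`
  have := congrArg (rootMultiplicity (β : ℚ)⁻¹) h
  rw [rootMultiplicity_mul hrhs, hpow, hpow, rootMultiplicity_prod_Ico_linFactor hβ hββ'] at this
  have hdvd : r ∣ 1 := (Nat.dvd_add_right (dvd_mul_right r _)).mp (this ▸ dvd_mul_right r _)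
  have := Nat.le_of_dvd one_pos hdvd
  omega

theorem eq_zero_of_coe_mul_eq_coe_mul {r β β' : ℕ} (hr : 2 ≤ r) (hβ : 1 ≤ β) (hββ' : β < β')
    {ω ω' : ℚ⟦X⟧} (hω : ω ^ r * (linFactorProd β : ℚ⟦X⟧) = 1)
    (hω' : ω' ^ r * (linFactorProd β' : ℚ⟦X⟧) = 1) {a b : ℚ[X]} (h : a * ω = b * ω') :
    a = 0 ∧ b = 0 := by
  set Q := ∏ j ∈ Finset.Ico β β', linFactor j
  have hb : b = 0 := by
    by_contra hb
    refine pow_ne_pow_mul_prod_Ico_linFactor hr hβ hββ' (a := a) hb (Polynomial.coe_inj.mp ?_)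
    calc ((b ^ r : ℚ[X]) : ℚ⟦X⟧) = (b * ω') ^ r * linFactorProd β' := by
          push_cast; linear_combination (b : ℚ⟦X⟧) ^ r * hω'.symm
      _ = (a * ω) ^ r * linFactorProd β * Q := by
          rw [← h, ← linFactorProd_mul_prod_Ico hβ hββ'.le, coe_mul]; ring
      _ = ((a ^ r * Q : ℚ[X]) : ℚ⟦X⟧) := by
          rw [coe_mul, coe_pow]; linear_combination (a : ℚ⟦X⟧) ^ r * Q * hω
  subst hb
  refine ⟨?_, rfl⟩
  rw [Polynomial.coe_zero, zero_mul] at h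
  exact Polynomial.coe_eq_zero_iff.mp
    ((mul_eq_zero.mp h).resolve_right (ne_zero_pow (by omega) (left_ne_zero_of_mul_eq_one hω)))

theorem eq_zero_of_coe_add_coe_mul_add_coe_mul_eq_zero {r β₁ β₂ : ℕ} (hr : 2 ≤ r)
    (hβ₁ : 2 ≤ β₁) (hβ₁₂ : β₁ < β₂) {ω₁ ω₂ : ℚ⟦X⟧}
    (hω₁ : ω₁ ^ r * (linFactorProd β₁ : ℚ⟦X⟧) = 1) (hω₂ : ω₂ ^ r * (linFactorProd β₂ : ℚ⟦X⟧) = 1)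
    {T B₁ B₂ : ℚ[X]} (hT : T ≠ 0) (hTω₁ : T * d⁄dX ℚ ω₁ = B₁ * ω₁)
    (hTω₂ : T * d⁄dX ℚ ω₂ = B₂ * ω₂) {q₀ q₁ q₂ : ℚ[X]}
    (h : (q₀ : ℚ⟦X⟧) + q₁ * ω₁ + q₂ * ω₂ = 0) : q₀ = 0 ∧ q₁ = 0 ∧ q₂ = 0 := by
  have h₁ : (1 : ℚ⟦X⟧) ^ r * (linFactorProd 1 : ℚ⟦X⟧) = 1 := by simp [linFactorProd]
  have hq₁ : q₁ = 0 := by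
    by_cases hq₂ : q₂ = 0
    · subst hq₂
      exact (eq_zero_of_coe_mul_eq_coe_mul hr le_rfl (by omega) h₁ hω₁ (a := -q₀)
        (by push_cast at h ⊢; linear_combination -h)).2
    set L₀ := T * derivative q₀
    set L₁ := T * derivative q₁ + B₁ * q₁
    set L₂ := T * derivative q₂ + B₂ * q₂
    have hL₁ : (T : ℚ⟦X⟧) * d⁄dX ℚ (q₁ * ω₁) = L₁ * ω₁ :=
      PowerSeries.coe_mul_derivative_coe_mul hTω₁ q₁
    have hL₂ : (T : ℚ⟦X⟧) * d⁄dX ℚ (q₂ * ω₂) = L₂ * ω₂ :=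
      PowerSeries.coe_mul_derivative_coe_mul hTω₂ q₂
    -- apply `T · d/dX` to `h`, then eliminate `ω₂`
    have hδ : (L₀ : ℚ⟦X⟧) + L₁ * ω₁ + L₂ * ω₂ = 0 := by
      have := congrArg (fun z => (T : ℚ⟦X⟧) * d⁄dX ℚ z) h
      simp only [map_add, mul_add, map_zero, mul_zero, hL₁, hL₂, PowerSeries.derivative_coe] at this
      rwa [← coe_mul] at this
    have hL : L₂ * q₁ - q₂ * L₁ = 0 := by
      refine (eq_zero_of_coe_mul_eq_coe_mul hr le_rfl (by omega) h₁ hω₁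
        (a := -(L₂ * q₀ - q₂ * L₀)) ?_).2
      push_cast; linear_combination (q₂ : ℚ⟦X⟧) * hδ - (L₂ : ℚ⟦X⟧) * h
    have hL' : (L₂ : ℚ⟦X⟧) * q₁ = q₂ * L₁ := by exact_mod_cast sub_eq_zero.mp hL
    have hq₂ω₂ : (q₂ : ℚ⟦X⟧) * ω₂ ≠ 0 := mul_ne_zero (by exact_mod_cast hq₂)
      (ne_zero_pow (by omega) (left_ne_zero_of_mul_eq_one hω₂))
    obtain ⟨c, hc⟩ := PowerSeries.exists_eq_C_mul_of_mul_derivative_eq hq₂ω₂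
      (g := (q₁ : ℚ⟦X⟧) * ω₁) <| mul_left_cancel₀ (by exact_mod_cast hT : (T : ℚ⟦X⟧) ≠ 0) <| by
        linear_combination (q₂ : ℚ⟦X⟧) * ω₂ * hL₁ - (q₁ : ℚ⟦X⟧) * ω₁ * hL₂ - ω₁ * ω₂ * hL'
    exact (eq_zero_of_coe_mul_eq_coe_mul hr (by omega) hβ₁₂ hω₁ hω₂ (b := C c * q₂)
      (by rw [hc]; push_cast; ring)).1
  subst hq₁
  obtain ⟨h₀, h₂⟩ := eq_zero_of_coe_mul_eq_coe_mul hr le_rfl (by omega) h₁ hω₂ (a := -q₀)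
    (b := q₂) (by push_cast at h ⊢; linear_combination -h)
  exact ⟨neg_eq_zero.mp h₀, rfl, h₂⟩

theorem coe_map_Pbr_mul {T B : ℤ[X]} {ω : ℚ⟦X⟧}
    (hω : (T.map (Int.castRingHom ℚ) : ℚ⟦X⟧) * d⁄dX ℚ ω = (B.map (Int.castRingHom ℚ) : ℚ⟦X⟧) * ω)
    (P : ℤ[X]) (k : ℕ) :
    ((Pbr T B P k).map (Int.castRingHom ℚ) : ℚ⟦X⟧) * ω =
      (fun z => (T.map (Int.castRingHom ℚ) : ℚ⟦X⟧) * d⁄dX ℚ z)^[k]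
        ((P.map (Int.castRingHom ℚ) : ℚ⟦X⟧) * ω) := by
  induction k with
  | zero => rfl
  | succ k ih =>
    rw [Function.iterate_succ_apply', ← ih, PowerSeries.coe_mul_derivative_coe_mul hω, Pbr,
      Polynomial.map_add, Polynomial.map_mul, Polynomial.map_mul, derivative_map]

theorem map_det_Pbr_mul_prod {n : ℕ} {T : ℤ[X]} {B P : Fin n → ℤ[X]} {ω : Fin n → ℚ⟦X⟧}
    (hω : ∀ i, (T.map (Int.castRingHom ℚ) : ℚ⟦X⟧) * d⁄dX ℚ (ω i) =
      ((B i).map (Int.castRingHom ℚ) : ℚ⟦X⟧) * ω i) :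
    (∏ i, ω i) * ((Matrix.det (Matrix.of fun k i : Fin n => Pbr T (B i) (P i) k)).map
        (Int.castRingHom ℚ) : ℚ⟦X⟧) =
      Matrix.det (Matrix.of fun k i : Fin n =>
        (fun z => (T.map (Int.castRingHom ℚ) : ℚ⟦X⟧) * d⁄dX ℚ z)^[k]
          (((P i).map (Int.castRingHom ℚ) : ℚ⟦X⟧) * ω i)) := by
  have := RingHom.map_det
    ((Polynomial.coeToPowerSeries.ringHom).comp (Polynomial.mapRingHom (Int.castRingHom ℚ)))
    (Matrix.of fun k i : Fin n => Pbr T (B i) (P i) k)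
  simp only [RingHom.comp_apply, coeToPowerSeries.ringHom_apply, coe_mapRingHom] at this
  rw [this, ← Matrix.det_mul_row]
  congr 1
  refine Matrix.ext fun k i => ?_
  simp only [RingHom.mapMatrix_apply, Matrix.map_apply, Matrix.of_apply, RingHom.comp_apply,
    coeToPowerSeries.ringHom_apply, coe_mapRingHom]
  rw [mul_comm, coe_map_Pbr_mul (hω i)]

theorem eq_zero_of_C_mul_map_eq_zero {a : ℚ} {P : ℤ[X]} (hP : P ≠ 0)
    (h : C a * P.map (Int.castRingHom ℚ) = 0) : a = 0 :=
  C_eq_zero.mp ((mul_eq_zero.mp h).resolve_right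
    ((Polynomial.map_ne_zero_iff (RingHom.injective_int _)).mpr hP))

theorem determinant_polynomial_nonzero_general (r M : ℕ) (hr : 2 ≤ r)
    (β₁ β₂ : ℕ) (hβ₁ : 2 ≤ β₁) (hβ₁₂ : β₁ < β₂) (hβ₂ : β₂ ≤ M)
    (P₀ P₁ P₂ : Polynomial ℤ) (h₀ : P₀ ≠ 0) (h₁ : P₁ ≠ 0) (h₂ : P₂ ≠ 0) :
    Matrix.det (Matrix.of fun k i : Fin 3 =>
        Pbr (Tpoly r M) (![0, Bpoly M β₁, Bpoly M β₂] i) (![P₀, P₁, P₂] i) (k : ℕ))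
      ≠ 0 := by
  obtain ⟨ω₁, hω₁⟩ := exists_pow_mul_linFactorProd_eq_one (by omega : r ≠ 0) β₁
  obtain ⟨ω₂, hω₂⟩ := exists_pow_mul_linFactorProd_eq_one (by omega : r ≠ 0) β₂
  have hTω₁ := coe_map_Tpoly_mul_derivative (M := M) (by omega) (by omega) hω₁
  have hTω₂ := coe_map_Tpoly_mul_derivative (M := M) (by omega) (by omega) hω₂
  have hT := map_Tpoly_ne_zero (by omega : r ≠ 0) M
  intro hΔ
  have hW := map_det_Pbr_mul_prod (T := Tpoly r M) (B := ![0, Bpoly M β₁, Bpoly M β₂])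
    (P := ![P₀, P₁, P₂]) (ω := ![1, ω₁, ω₂]) (fun i => by fin_cases i; exacts [by simp, hTω₁, hTω₂])
  rw [hΔ, Polynomial.map_zero, coe_zero, mul_zero, eq_comm, PowerSeries.det_iterate_mul_derivative,
    mul_eq_zero] at hW
  obtain ⟨c, hc, hsum⟩ := PowerSeries.exists_linear_dependence_of_det_iterate_derivative_eq_zero
    (hW.resolve_left (pow_ne_zero 3 (by exact_mod_cast hT)))
  obtain ⟨e₀, e₁, e₂⟩ := eq_zero_of_coe_add_coe_mul_add_coe_mul_eq_zero hr hβ₁ hβ₁₂ hω₁ hω₂ hT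
    hTω₁ hTω₂ (q₀ := C (c 0) * P₀.map (Int.castRingHom ℚ))
    (q₁ := C (c 1) * P₁.map (Int.castRingHom ℚ)) (q₂ := C (c 2) * P₂.map (Int.castRingHom ℚ))
    (by simp only [Fin.sum_univ_three] at hsum; push_cast; simpa [mul_assoc] using hsum)
  refine hc (funext fun i => ?_)
  fin_cases i
  exacts [eq_zero_of_C_mul_map_eq_zero h₀ e₀, eq_zero_of_C_mul_map_eq_zero h₁ e₁,
    eq_zero_of_C_mul_map_eq_zero h₂ e₂]

/-- **The determinant polynomial is nonzero** (Lemma 5.4, after Siegel).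
If `P₀, P₁, P₂ ∈ ℤ[X]` are all nonzero, then the determinant `Δ` of the `3×3` polynomial
matrix with `(k,i)` entry `P_i^{[k]}` (for `0 ≤ k, i ≤ 2`) is not the zero polynomial. -/
theorem determinant_polynomial_nonzero (r M : ℕ) (hr : 2 ≤ r) (hM : 2 ≤ M)
    (β₁ β₂ : ℕ) (hβ₁ : 2 ≤ β₁) (hβ₁₂ : β₁ < β₂) (hβ₂ : β₂ ≤ M)
    (P₀ P₁ P₂ : Polynomial ℤ) (h₀ : P₀ ≠ 0) (h₁ : P₁ ≠ 0) (h₂ : P₂ ≠ 0) :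
    Matrix.det (Matrix.of fun k i : Fin 3 =>
        Pbr (Tpoly r M) (![0, Bpoly M β₁, Bpoly M β₂] i) (![P₀, P₁, P₂] i) (k : ℕ))
      ≠ 0 :=
  determinant_polynomial_nonzero_general r M hr β₁ β₂ hβ₁ hβ₁₂ hβ₂ P₀ P₁ P₂ h₀ h₁ h₂
end

section
/- Let r ≥ 2 and M ≥ 2 be integers and let β_1, β_2 be integers with 2 ≤ β_1 < β_2 ≤ M. Set T(X) := r·∏_{j=1}^{M}(1−jX) ∈ ℤ[X], B_0 := 0, and B_{β_i}(X) := Σ_{j=1}^{β_i−1} j·∏_{1≤j'≤M, j'≠j}(1−j'X) ∈ ℤ[X]. Let P_0, P_1, P_2 ∈ ℤ[X]. For i = 0, 1, 2 define P_i^{[0]} := P_i and P_i^{[k+1]} := T·(P_i^{[k]})′ + B_{β_i}·P_i^{[k]} (with B_{β_0} meaning B_0 = 0), and also define S_{i,0} := P_i, S_{i,k+1} := T·S_{i,k}′ − k·T′·S_{i,k} + B_{β_i}·S_{i,k}, and P_i^{⟨k⟩} := S_{i,k}/k! ∈ ℚ[X]. Suppose the determinant Δ of the 3×3 polynomial matrix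 whose (k,i) entry is P_i^{[k]} for 0 ≤ k, i ≤ 2 is not the zero polynomial. Let α ∈ ℚ be nonzero with T(α) ≠ 0, and write a for the multiplicity of α as a root of Δ. Then the (a+3)×3 rational matrix whose (k,i) entry is P_i^{⟨k⟩}(α) for 0 ≤ k ≤ a+2, 0 ≤ i ≤ 2 has rank three. -/
/-- The polynomials `S_k`, defined by `S_0 = P`, `S_{k+1} = T·S_k′ − k·T′·S_k + B·S_k`. -/
noncomputable def Sseq (T B P : Polynomial ℤ) : ℕ → Polynomial ℤ
  | 0 => P
  | k + 1 => T * Polynomial.derivative (Sseq T B P k)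
      - (k : Polynomial ℤ) * Polynomial.derivative T * Sseq T B P k
      + B * Sseq T B P k

/-- The alternate Padé polynomials `P^{⟨k⟩} := S_k / k! ∈ ℚ[X]`. -/
noncomputable def Pang (T B P : Polynomial ℤ) (k : ℕ) : Polynomial ℚ :=
  Polynomial.C ((k.factorial : ℚ)⁻¹) * (Sseq T B P k).map (Int.castRingHom ℚ)

/-!
Expand at `α`: let `ψ p := p(α + X) ∈ ℚ⟦X⟧`. Since `T(α) ≠ 0`, `ψ T` is a unit and each equation
`T·E′ = B_i·E` has a solution `E_i = exp ∫ B_i/T` with `E_i(0) = 1`. For `f_i := E_i·ψ P_i` one has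
`(ψ T)^k·f_i^{(k)} = E_i·ψ S_{i,k}`, so `P_i^{⟨k⟩}(α) = T(α)^k·[X^k] f_i`, and the Wronskian `W` of
`f_0, f_1, f_2` satisfies `(ψ T)^3·W = E_0 E_1 E_2·ψ Δ` (the matrices `(S_{i,k})` and `(P_i^{[k]})`
differ by a unipotent row operation), so `W` has order exactly `a`. A nonzero kernel vector `c` of
the matrix would make `Σ c_i f_i` vanish to order `a + 3`, and by Cramer's rule `c_j·W` is a
combination of it and its first two derivatives, hence of order `> a`.
-/

open Polynomial
open scoped PowerSeries Matrix

namespace PowerSeries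

section IntegratingFactor

variable {A : Type*} [CommRing A] [Algebra ℚ A]

/-- The solution is `exp (∫ T⁻¹ B)`. -/
theorem exists_constantCoeff_eq_one_and_mul_derivative_eq {T : A⟦X⟧} (hT : IsUnit T)
    (B : A⟦X⟧) : ∃ E : A⟦X⟧, constantCoeff E = 1 ∧ T * d⁄dX A E = B * E := by
  set Q := ↑hT.unit⁻¹ * B
  set F : A⟦X⟧ := mk fun n => if n = 0 then 0 else (n : ℚ)⁻¹ • coeff (n - 1) Q with hF
  have hF0 : constantCoeff F = 0 := by
    rw [← coeff_zero_eq_constantCoeff_apply, hF, coeff_mk, if_pos rfl]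
  have hFQ : d⁄dX A F = Q := by
    ext n
    rw [coeff_derivative, hF, coeff_mk, if_neg n.succ_ne_zero, Nat.add_sub_cancel,
      Algebra.smul_def, mul_comm, ← mul_assoc, ← Nat.cast_succ, ← map_natCast (algebraMap ℚ A),
      ← map_mul, mul_inv_cancel₀ (by positivity), map_one, one_mul]
  have hsubst : HasSubst F := HasSubst.of_constantCoeff_zero' hF0
  refine ⟨(exp A).subst F, ?_, ?_⟩
  · rw [← coeff_zero_eq_constantCoeff_apply, coeff_subst' hsubst, finsum_eq_single _ 0]
    · simp
    · intro d hd
      rw [coeff_zero_eq_constantCoeff_apply, map_pow, hF0, zero_pow hd, smul_zero]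
  · rw [derivative_subst hsubst, derivative_exp, hFQ, mul_left_comm, ← mul_assoc T,
      IsUnit.mul_val_inv, one_mul, mul_comm]

end IntegratingFactor

section Wronskian

variable {R : Type*} [CommRing R]

noncomputable def wronskian {n : ℕ} (f : Fin n → R⟦X⟧) : R⟦X⟧ :=
  (Matrix.of fun k i : Fin n => (d⁄dX R)^[k] (f i)).det

theorem iterate_derivative_sum_smul {ι : Type*} (s : Finset ι) (c : ι → R) (f : ι → R⟦X⟧)
    (k : ℕ) : (d⁄dX R)^[k] (∑ i ∈ s, c i • f i) = ∑ i ∈ s, c i • (d⁄dX R)^[k] (f i) := by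
  induction k with
  | zero => rfl
  | succ k ih => simp only [Function.iterate_succ_apply', ih, map_sum, Derivation.map_smul]

theorem X_pow_dvd_iterate_derivative {g : R⟦X⟧} {m k : ℕ} (hg : X ^ (m + k) ∣ g) :
    X ^ m ∣ (d⁄dX R)^[k] g := by
  rw [X_pow_dvd_iff] at hg ⊢
  intro i hi
  rw [coeff_iterate_derivative, hg (i + k) (by omega), mul_zero]

theorem X_pow_dvd_of_X_pow_dvd_smul [NoZeroDivisors R] {c : R} (hc : c ≠ 0) {g : R⟦X⟧} {m : ℕ}
    (h : X ^ m ∣ c • g) : X ^ m ∣ g := by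
  rw [X_pow_dvd_iff] at h ⊢
  intro i hi
  simpa [hc] using h i hi

/-- By Cramer's rule `c • W` is a combination of the derivatives of `∑ cᵢ fᵢ`. -/
theorem not_X_pow_dvd_sum_smul [NoZeroDivisors R] {n : ℕ} (f : Fin n → R⟦X⟧) {c : Fin n → R}
    (hc : c ≠ 0) {a : ℕ} (hW : ¬ X ^ (a + 1) ∣ wronskian f) :
    ¬ X ^ (a + n) ∣ ∑ i, c i • f i := by
  intro hg
  obtain ⟨j, hj⟩ := Function.ne_iff.mp hc
  set A := Matrix.of fun k i : Fin n => (d⁄dX R)^[k] (f i)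
  have hA : A *ᵥ (fun i => C (c i)) = fun k : Fin n => (d⁄dX R)^[k] (∑ i, c i • f i) := by
    ext1 k
    rw [iterate_derivative_sum_smul]
    simp only [A, Matrix.mulVec, dotProduct, Matrix.of_apply, smul_eq_C_mul, mul_comm]
  have hcramer : wronskian f • (fun i => C (c i)) =
      A.adjugate *ᵥ fun k : Fin n => (d⁄dX R)^[k] (∑ i, c i • f i) := by
    rw [← hA, Matrix.mulVec_mulVec, Matrix.adjugate_mul, Matrix.smul_mulVec, Matrix.one_mulVec]
    rfl
  have hWj : wronskian f * C (c j) =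
      ∑ k, A.adjugate j k * (d⁄dX R)^[k] (∑ i, c i • f i) := congrFun hcramer j
  refine hW (X_pow_dvd_of_X_pow_dvd_smul hj ?_)
  rw [smul_eq_C_mul, mul_comm, hWj]
  refine Finset.dvd_sum fun k _ => Dvd.dvd.mul_left (X_pow_dvd_iterate_derivative ?_) _
  exact (pow_dvd_pow X (by omega)).trans hg

theorem rank_coeff_matrix_eq_of_not_X_pow_dvd_wronskian {K : Type*} [Field K] {n a : ℕ}
    (f : Fin n → K⟦X⟧) (hW : ¬ X ^ (a + 1) ∣ wronskian f) :
    (Matrix.of fun (k : Fin (a + n)) (i : Fin n) => coeff k (f i)).rank = n := by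
  have hinj : Function.Injective
      (Matrix.of fun (k : Fin (a + n)) (i : Fin n) => coeff k (f i)).mulVecLin := by
    rw [← LinearMap.ker_eq_bot, LinearMap.ker_eq_bot']
    intro c hc
    by_contra hc0
    refine not_X_pow_dvd_sum_smul f hc0 hW (X_pow_dvd_iff.mpr fun k hk => ?_)
    simpa [Matrix.mulVec, dotProduct, mul_comm] using congrFun hc ⟨k, hk⟩
  rw [Matrix.rank, LinearMap.finrank_range_of_inj hinj, Module.finrank_fin_fun]

end Wronskian

end PowerSeries

section TaylorSeries

variable {K : Type*} [CommRing K]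

noncomputable def taylorSeries (α : K) : ℤ[X] →+* K⟦X⟧ :=
  Polynomial.coeToPowerSeries.ringHom.comp
    ((taylorAlgHom α).toRingHom.comp (mapRingHom (Int.castRingHom K)))

theorem taylorSeries_apply (α : K) (p : ℤ[X]) :
    taylorSeries α p = (taylor α (p.map (Int.castRingHom K)) : K⟦X⟧) :=
  rfl

theorem derivative_taylorSeries (α : K) (p : ℤ[X]) :
    d⁄dX K (taylorSeries α p) = taylorSeries α (derivative p) := by
  simp [taylorSeries_apply, PowerSeries.derivative_coe, taylor_apply, derivative_comp,
    derivative_map]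

theorem constantCoeff_taylorSeries (α : K) (p : ℤ[X]) :
    PowerSeries.constantCoeff (taylorSeries α p) = aeval α p := by
  rw [taylorSeries_apply, ← PowerSeries.coeff_zero_eq_constantCoeff_apply,
    Polynomial.coeff_coe, taylor_coeff_zero, ← algebraMap_int_eq, eval_map_algebraMap]

theorem not_X_pow_dvd_taylorSeries (α : K) {p : ℤ[X]} (hp : p.map (Int.castRingHom K) ≠ 0) :
    ¬ PowerSeries.X ^ (rootMultiplicity α (p.map (Int.castRingHom K)) + 1) ∣ taylorSeries α p := by
  rw [PowerSeries.X_pow_dvd_iff, taylorSeries_apply, rootMultiplicity_eq_natTrailingDegree]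
  intro h
  refine coeff_natTrailingDegree_ne_zero.mpr ((taylor_eq_zero α _).not.mpr hp) ?_
  simpa [taylor_apply] using h _ (Nat.lt_succ_self _)

end TaylorSeries

theorem Sseq_one (T B P : ℤ[X]) : Sseq T B P 1 = Pbr T B P 1 := by
  simp [Sseq, Pbr]

theorem Sseq_two (T B P : ℤ[X]) :
    Sseq T B P 2 = Pbr T B P 2 - derivative T * Pbr T B P 1 := by
  simp only [Sseq, Pbr, Nat.cast_zero, Nat.cast_one, zero_mul, sub_zero, one_mul]
  ring

theorem det_Sseq_eq_det_Pbr (T : ℤ[X]) (B P : Fin 3 → ℤ[X]) :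
    (Matrix.of fun k i : Fin 3 => Sseq T (B i) (P i) k).det =
      (Matrix.of fun k i : Fin 3 => Pbr T (B i) (P i) k).det := by
  simp only [Matrix.det_fin_three, Matrix.of_apply, Fin.val_zero, Fin.val_one, Fin.val_two,
    Sseq_one, Sseq_two]
  simp only [Sseq, Pbr]
  ring

section DifferentialHom

variable {R : Type*} [CommRing R] {ψ : ℤ[X] →+* R⟦X⟧}

theorem pow_mul_iterate_derivative_eq_mul_Sseq
    (hψ : ∀ p, d⁄dX R (ψ p) = ψ (derivative p)) {T B : ℤ[X]} {E : R⟦X⟧}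
    (hE : ψ T * d⁄dX R E = ψ B * E) (P : ℤ[X]) (k : ℕ) :
    ψ T ^ k * (d⁄dX R)^[k] (E * ψ P) = E * ψ (Sseq T B P k) := by
  induction k with
  | zero => simp [Sseq]
  | succ k ih =>
    have hdih := congrArg (d⁄dX R) ih
    simp only [Derivation.leibniz, Derivation.leibniz_pow, smul_eq_mul, nsmul_eq_mul, hψ] at hdih
    have hpow : ψ T * (k * ψ T ^ (k - 1)) = k * ψ T ^ k := by
      cases k with
      | zero => simp
      | succ k => rw [Nat.add_sub_cancel, pow_succ]; ring
    simp only [Sseq, map_add, map_sub, map_mul, map_natCast, Function.iterate_succ_apply']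
    linear_combination ψ T * hdih + ψ (Sseq T B P k) * hE
      - (ψ (derivative T) * (d⁄dX R)^[k] (E * ψ P)) * hpow - (k * ψ (derivative T)) * ih

theorem pow_three_mul_wronskian_eq (hψ : ∀ p, d⁄dX R (ψ p) = ψ (derivative p)) {T : ℤ[X]}
    {B P : Fin 3 → ℤ[X]} {E : Fin 3 → R⟦X⟧} (hE : ∀ i, ψ T * d⁄dX R (E i) = ψ (B i) * E i) :
    ψ T ^ 3 * PowerSeries.wronskian (fun i => E i * ψ (P i)) =
      (∏ i, E i) * ψ (Matrix.of fun k i : Fin 3 => Pbr T (B i) (P i) k).det := by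
  calc ψ T ^ 3 * PowerSeries.wronskian (fun i => E i * ψ (P i))
      = (∏ k : Fin 3, ψ T ^ (k : ℕ)) * PowerSeries.wronskian (fun i => E i * ψ (P i)) := by
        simp only [Fin.prod_univ_three, Fin.val_zero, Fin.val_one, Fin.val_two]
        ring
    _ = (Matrix.of fun k i : Fin 3 => E i * ψ (Sseq T (B i) (P i) k)).det := by
        rw [PowerSeries.wronskian, ← Matrix.det_mul_column]
        simp only [Matrix.of_apply, pow_mul_iterate_derivative_eq_mul_Sseq hψ (hE _)]
    _ = (∏ i, E i) * ψ (Matrix.of fun k i : Fin 3 => Sseq T (B i) (P i) k).det := by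
        rw [RingHom.map_det]
        exact Matrix.det_mul_row E _
    _ = (∏ i, E i) * ψ (Matrix.of fun k i : Fin 3 => Pbr T (B i) (P i) k).det := by
        rw [det_Sseq_eq_det_Pbr]

end DifferentialHom

theorem eval_Pang_eq_pow_mul_coeff (α : ℚ) {T B : ℤ[X]} {E : ℚ⟦X⟧}
    (hE₀ : PowerSeries.constantCoeff E = 1)
    (hE : taylorSeries α T * d⁄dX ℚ E = taylorSeries α B * E) (P : ℤ[X]) (k : ℕ) :
    eval α (Pang T B P k) = aeval α T ^ k * PowerSeries.coeff k (E * taylorSeries α P) := by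
  have h := congrArg PowerSeries.constantCoeff
    (pow_mul_iterate_derivative_eq_mul_Sseq (derivative_taylorSeries α) hE P k)
  rw [map_mul, map_mul, map_pow, PowerSeries.constantCoeff_iterate_derivative, hE₀, one_mul,
    constantCoeff_taylorSeries, constantCoeff_taylorSeries] at h
  rw [Pang, eval_mul, eval_C, ← algebraMap_int_eq, eval_map_algebraMap, ← h]
  field_simp

theorem rank_Pang_matrix_eq_three (T : ℤ[X]) (B P : Fin 3 → ℤ[X]) {α : ℚ}
    (hTα : aeval α T ≠ 0) (hΔ : (Matrix.of fun k i : Fin 3 => Pbr T (B i) (P i) k).det ≠ 0) :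
    (Matrix.of fun (k : Fin (rootMultiplicity α
        ((Matrix.of fun k i : Fin 3 => Pbr T (B i) (P i) k).det.map (Int.castRingHom ℚ)) + 3))
        (i : Fin 3) => eval α (Pang T (B i) (P i) k)).rank = 3 := by
  set ψ := taylorSeries (K := ℚ) α with hψ_def
  set a := rootMultiplicity α
    ((Matrix.of fun k i : Fin 3 => Pbr T (B i) (P i) k).det.map (Int.castRingHom ℚ))
  have hT : IsUnit (ψ T) := by
    rw [PowerSeries.isUnit_iff_constantCoeff, constantCoeff_taylorSeries]
    exact hTα.isUnit
  choose E hE₀ hE using fun i =>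
    PowerSeries.exists_constantCoeff_eq_one_and_mul_derivative_eq hT (ψ (B i))
  have hE_unit : IsUnit (∏ i, E i) :=
    IsUnit.prod_univ_iff.mpr fun i => PowerSeries.isUnit_iff_constantCoeff.mpr (by simp [hE₀])
  have hW : ¬ PowerSeries.X ^ (a + 1) ∣ PowerSeries.wronskian (fun i => E i * ψ (P i)) := by
    intro h
    refine not_X_pow_dvd_taylorSeries α ((Polynomial.map_ne_zero_iff
      (RingHom.injective_int _)).mpr hΔ) ?_
    rw [← hE_unit.dvd_mul_left, ← pow_three_mul_wronskian_eq (derivative_taylorSeries α) hE]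
    exact h.mul_left _
  have hmat : (Matrix.of fun (k : Fin (a + 3)) (i : Fin 3) => eval α (Pang T (B i) (P i) k)) =
      Matrix.diagonal (fun k : Fin (a + 3) => aeval α T ^ (k : ℕ)) *
        Matrix.of fun (k : Fin (a + 3)) (i : Fin 3) => PowerSeries.coeff k (E i * ψ (P i)) := by
    ext k i
    simp [Matrix.diagonal_mul, eval_Pang_eq_pow_mul_coeff α (hE₀ i) (hE i), hψ_def]
  have hdiag : IsUnit (Matrix.diagonal fun k : Fin (a + 3) => aeval α T ^ (k : ℕ)).det := by
    rw [Matrix.det_diagonal]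
    exact (Finset.prod_ne_zero_iff.mpr fun k _ => pow_ne_zero _ hTα).isUnit
  rw [hmat, Matrix.rank_mul_eq_right_of_isUnit_det _ _ hdiag,
    PowerSeries.rank_coeff_matrix_eq_of_not_X_pow_dvd_wronskian _ hW]

theorem angle_matrix_full_rank_general (r M : ℕ)
    (β₁ β₂ : ℕ)
    (P₀ P₁ P₂ : Polynomial ℤ)
    (hΔ : Matrix.det (Matrix.of fun k i : Fin 3 =>
        Pbr (Tpoly r M) (![0, Bpoly M β₁, Bpoly M β₂] i) (![P₀, P₁, P₂] i) (k : ℕ)) ≠ 0)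
    (α : ℚ) (hTα : Polynomial.aeval α (Tpoly r M) ≠ 0)
    (a : ℕ)
    (ha : a = Polynomial.rootMultiplicity α
      ((Matrix.det (Matrix.of fun k i : Fin 3 =>
          Pbr (Tpoly r M) (![0, Bpoly M β₁, Bpoly M β₂] i) (![P₀, P₁, P₂] i)
            (k : ℕ))).map (Int.castRingHom ℚ))) :
    Matrix.rank (Matrix.of fun (k : Fin (a + 3)) (i : Fin 3) =>
        Polynomial.eval α
          (Pang (Tpoly r M) (![0, Bpoly M β₁, Bpoly M β₂] i) (![P₀, P₁, P₂] i) (k : ℕ)))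
      = 3 := by
  subst ha
  exact rank_Pang_matrix_eq_three (Tpoly r M) ![0, Bpoly M β₁, Bpoly M β₂] ![P₀, P₁, P₂] hTα hΔ

/-- **The `P_i^{⟨k⟩}(α)` matrix has full rank** (Lemma 6.3).
Suppose the determinant `Δ` of the `3×3` matrix of `P_i^{[k]}` is nonzero, `α ∈ ℚ` is nonzero
with `T(α) ≠ 0`, and `a` is the multiplicity of `α` as a root of `Δ`. Then the `(a+3)×3`
matrix with entries `P_i^{⟨k⟩}(α)` has rank three. -/
theorem angle_matrix_full_rank (r M : ℕ) (hr : 2 ≤ r) (hM : 2 ≤ M)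
    (β₁ β₂ : ℕ) (hβ₁ : 2 ≤ β₁) (hβ₁₂ : β₁ < β₂) (hβ₂ : β₂ ≤ M)
    (P₀ P₁ P₂ : Polynomial ℤ)
    (hΔ : Matrix.det (Matrix.of fun k i : Fin 3 =>
        Pbr (Tpoly r M) (![0, Bpoly M β₁, Bpoly M β₂] i) (![P₀, P₁, P₂] i) (k : ℕ)) ≠ 0)
    (α : ℚ) (hα : α ≠ 0) (hTα : Polynomial.aeval α (Tpoly r M) ≠ 0)
    (a : ℕ)
    (ha : a = Polynomial.rootMultiplicity α
      ((Matrix.det (Matrix.of fun k i : Fin 3 =>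
          Pbr (Tpoly r M) (![0, Bpoly M β₁, Bpoly M β₂] i) (![P₀, P₁, P₂] i)
            (k : ℕ))).map (Int.castRingHom ℚ))) :
    Matrix.rank (Matrix.of fun (k : Fin (a + 3)) (i : Fin 3) =>
        Polynomial.eval α
          (Pang (Tpoly r M) (![0, Bpoly M β₁, Bpoly M β₂] i) (![P₀, P₁, P₂] i) (k : ℕ)))
      = 3 :=
  angle_matrix_full_rank_general r M β₁ β₂ P₀ P₁ P₂ hΔ α hTα a ha
end
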